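/- arXiv:1811.01320 — 14 statements merged into one kernel-verified Lean document; each statement's English description precedes it below -/
import Mathlib

section
/- If the beliefs Π satisfy weak convex independence, then weak full extraction holds: for every value function v : T → ℝ there exists a menu c : T → ℝ^S achieving weak full extraction for (Π, v). -/
/-!
Weak convex independence lets us strictly separate each `π(t)` from the beliefs of all other
types by a linear functional `f t`, normalised so that `f t` exceeds `f t (π t)` by at least `1`
at every `π s`, `s ≠ t`. The menu item of type `t` is the affine function
`v t + λ t * (f t - f t (π t))`, written as a vector through its values at the vertices of the
simplex. It takes the value `v t` at `π t`, and at every other `π s` it is at least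
`v t + λ t`, which is at least `v s` once the slope `λ t ≥ 0` dominates the differences of rents
(`λ t = ∑ s, |v s - v t|` will do).
-/

noncomputable section

/-- Euclidean inner product on ℝ^S. -/
def dotp {S : Type*} [Fintype S] (x y : S → ℝ) : ℝ := ∑ s, x s * y s

section Separation

variable {E : Type*} [TopologicalSpace E] [AddCommGroup E] [Module ℝ E]
  [IsTopologicalAddGroup E] [ContinuousSMul ℝ E] [LocallyConvexSpace ℝ E]

theorem exists_dual_add_one_le_of_notMem_closure_convexHull {x : E} {A : Set E}
    (hx : x ∉ closure (convexHull ℝ A)) : ∃ f : StrongDual ℝ E, ∀ a ∈ A, f x + 1 ≤ f a := by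
  obtain ⟨f, u, hxu, hu⟩ := geometric_hahn_banach_point_closed
    (convex_convexHull ℝ A).closure isClosed_closure hx
  have hgap : 0 < u - f x := sub_pos.mpr hxu
  refine ⟨(u - f x)⁻¹ • f, fun a ha => ?_⟩
  have hua : u < f a := hu a (subset_closure (subset_convexHull ℝ A ha))
  have hscaled : 1 ≤ (u - f x)⁻¹ * (f a - f x) := by
    rw [le_inv_mul_iff₀ hgap]
    linarith
  simp only [FunLike.coe_smul, Pi.smul_apply, smul_eq_mul]
  linarith [mul_sub (u - f x)⁻¹ (f a) (f x)]

end Separation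

theorem dotp_const_add_linearMap {S : Type*} [Fintype S] [DecidableEq S] {π : S → ℝ}
    (hπ : ∑ i, π i = 1) (a : ℝ) (g : (S → ℝ) →ₗ[ℝ] ℝ) :
    dotp π (fun i => a + g (fun j => if i = j then 1 else 0)) = a + g π := by
  simp only [dotp, mul_add, Finset.sum_add_distrib, ← Finset.sum_mul, hπ, one_mul,
    g.pi_apply_eq_sum_univ π, smul_eq_mul]

theorem exists_extracting_menu {S T : Type*} [Fintype S] [Fintype T] (p : T → (S → ℝ))
    (hp : ∀ t, ∑ i, p t i = 1) (hsep : ∀ t, p t ∉ closure (convexHull ℝ (p '' {s | s ≠ t})))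
    (v : T → ℝ) :
    ∃ c : T → (S → ℝ), ∀ t,
      dotp (p t) (c t) = v t ∧ ∀ s, s ≠ t → v t ≤ dotp (p t) (c s) := by
  choose f hf using fun s => exists_dual_add_one_le_of_notMem_closure_convexHull (hsep s)
  set slope : T → ℝ := fun s => ∑ t, |v t - v s|
  have hslope_nonneg : ∀ s, 0 ≤ slope s := fun s => Finset.sum_nonneg fun t _ => abs_nonneg _
  have hslope : ∀ s t, v t - v s ≤ slope s := fun s t =>
    (le_abs_self _).trans (Finset.single_le_sum (fun t _ => abs_nonneg (v t - v s))
      (Finset.mem_univ t))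
  classical
  let c : T → (S → ℝ) := fun s i => (v s - slope s * f s (p s)) +
    (slope s • f s : StrongDual ℝ (S → ℝ)) (fun j => if i = j then 1 else 0)
  refine ⟨c, fun t => ?_⟩
  have hdotp : ∀ s, dotp (p t) (c s) = v s + slope s * (f s (p t) - f s (p s)) := fun s =>
    calc dotp (p t) (c s) = (v s - slope s * f s (p s)) + (slope s • f s) (p t) :=
          dotp_const_add_linearMap (hp t) _ (slope s • f s).toLinearMap
      _ = v s + slope s * (f s (p t) - f s (p s)) := by
          rw [FunLike.coe_smul, Pi.smul_apply, smul_eq_mul]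
          ring
  refine ⟨by rw [hdotp]; ring, fun s hst => ?_⟩
  have hgap : f s (p s) + 1 ≤ f s (p t) := hf s (p t) ⟨t, hst.symm, rfl⟩
  have hslope_le : slope s ≤ slope s * (f s (p t) - f s (p s)) := by
    simpa using mul_le_mul_of_nonneg_left (le_sub_iff_add_le'.mpr hgap) (hslope_nonneg s)
  rw [hdotp]
  linarith [hslope s t]

theorem stmt_0_general {S T : Type*} [Fintype S] [Fintype T]
    (P : T → Set (S → ℝ))
    (hsub : ∀ t, P t ⊆ stdSimplex ℝ S)
    (hwci : ∃ p : T → (S → ℝ), (∀ t, p t ∈ P t) ∧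
      ∀ t, p t ∉ closure (convexHull ℝ (p '' {s | s ≠ t})))
    (v : T → ℝ) :
    ∃ c : T → (S → ℝ), ∀ t : T, ∃ π ∈ P t,
      dotp π (c t) = v t ∧ ∀ s, s ≠ t → v t ≤ dotp π (c s) := by
  obtain ⟨p, hpP, hsep⟩ := hwci
  obtain ⟨c, hc⟩ := exists_extracting_menu p (fun t => (hsub t (hpP t)).2) hsep v
  exact ⟨c, fun t => ⟨p t, hpP t, hc t⟩⟩

theorem stmt_0 {S T : Type*} [Fintype S] [Fintype T] [Nonempty S] [Nonempty T]
    (P : T → Set (S → ℝ))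
    (hne : ∀ t, (P t).Nonempty) (hcl : ∀ t, IsClosed (P t))
    (hcv : ∀ t, Convex ℝ (P t)) (hsub : ∀ t, P t ⊆ stdSimplex ℝ S)
    (hwci : ∃ p : T → (S → ℝ), (∀ t, p t ∈ P t) ∧
      ∀ t, p t ∉ closure (convexHull ℝ (p '' {s | s ≠ t})))
    (v : T → ℝ) :
    ∃ c : T → (S → ℝ), ∀ t : T, ∃ π ∈ P t,
      dotp π (c t) = v t ∧ ∀ s, s ≠ t → v t ≤ dotp π (c s) :=
  stmt_0_general P hsub hwci v
end
end

section
/- If the beliefs Π satisfy convex independence, then full extraction holds: for every value function v : T → ℝ there exists a menu c : T → ℝ^S achieving full extraction for (Π, v). -/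
/-!
For each type `t`, convex independence lets one strictly separate the compact convex set `Π(t)`
from the closed convex hull of the other beliefs. On probability vectors an affine functional is
a dot product, so this yields a scoring vector `g t` with `π·g t ≤ 0` on `Π(t)`, attaining `0`
there, and `π·g t ≥ 1` on every `Π(s)`, `s ≠ t`. With `M ≥ max v`, the menu
`c t = v t + (M - v t) g t` then gives type `t` at most `v t` from its own entry, exactly `v t`
for some belief, and at least `M` from any other entry.
-/

noncomputable section

/-- A menu `c` achieves full extraction for beliefs `P` and values `v`. -/
def FullExtraction {S T : Type*} [Fintype S] [Fintype T]
    (P : T → Set (S → ℝ)) (v : T → ℝ) (c : T → (S → ℝ)) : Prop :=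
  ∀ t : T, (∀ π ∈ P t, dotp π (c t) ≤ v t) ∧
    (∃ π ∈ P t, dotp π (c t) = v t) ∧
    (∀ π ∈ P t, ∀ s, s ≠ t → v t ≤ dotp π (c s))

lemma dotp_pi_single_eq {S F : Type*} [Fintype S] [DecidableEq S] [FunLike F (S → ℝ) ℝ]
    [LinearMapClass F ℝ (S → ℝ) ℝ] (f : F) (x : S → ℝ) :
    dotp x (fun s => f (Pi.single s 1)) = f x := by
  conv_rhs => rw [← Finset.univ_sum_single x]
  rw [map_sum, dotp]
  refine Finset.sum_congr rfl fun s _ => ?_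
  rw [← smul_eq_mul, ← map_smul, ← Pi.single_smul, smul_eq_mul, mul_one]

lemma dotp_const_add_mul {S : Type*} [Fintype S] {π : S → ℝ} (hπ : ∑ s, π s = 1)
    (a b : ℝ) (g : S → ℝ) : dotp π (fun s => a + b * g s) = a + b * dotp π g := by
  simp only [dotp, mul_add, Finset.sum_add_distrib, ← Finset.sum_mul, hπ, one_mul,
    Finset.mul_sum]
  exact congrArg _ (Finset.sum_congr rfl fun s _ => by ring)

lemma exists_dotp_separation {S : Type*} [Fintype S] {A B : Set (S → ℝ)}
    (hA : IsCompact A) (hAne : A.Nonempty) (hAcv : Convex ℝ A)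
    (hB : IsClosed B) (hBcv : Convex ℝ B) (hAB : Disjoint A B)
    (hA1 : ∀ π ∈ A, ∑ s, π s = 1) (hB1 : ∀ π ∈ B, ∑ s, π s = 1) :
    ∃ g : S → ℝ, (∀ π ∈ A, dotp π g ≤ 0) ∧ (∃ π ∈ A, dotp π g = 0) ∧
      ∀ π ∈ B, 1 ≤ dotp π g := by
  classical
  obtain ⟨f, u, w, hfu, huw, hwf⟩ := geometric_hahn_banach_compact_closed hAcv hA hBcv hB hAB
  obtain ⟨π₀, hπ₀, hmax⟩ := hA.exists_isMaxOn hAne f.continuous.continuousOn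
  have hgap : 0 < w - f π₀ := by linarith [hfu π₀ hπ₀]
  set g : S → ℝ := fun s => -f π₀ / (w - f π₀) + (w - f π₀)⁻¹ * f (Pi.single s 1)
  have hg : ∀ π, ∑ s, π s = 1 → dotp π g = (f π - f π₀) / (w - f π₀) := by
    intro π hπ
    rw [dotp_const_add_mul hπ, dotp_pi_single_eq f]
    ring
  refine ⟨g, fun π hπ => ?_, ⟨π₀, hπ₀, ?_⟩, fun π hπ => ?_⟩
  · rw [hg π (hA1 π hπ)]
    exact div_nonpos_of_nonpos_of_nonneg (sub_nonpos.2 (hmax hπ)) hgap.le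
  · rw [hg π₀ (hA1 π₀ hπ₀), sub_self, zero_div]
  · rw [hg π (hB1 π hπ), le_div_iff₀ hgap]
    linarith [hwf π hπ]

lemma fullExtraction_of_separating {S T : Type*} [Fintype S] [Fintype T]
    {P : T → Set (S → ℝ)} (hP1 : ∀ t, ∀ π ∈ P t, ∑ s, π s = 1) (g : T → S → ℝ)
    (hle : ∀ t, ∀ π ∈ P t, dotp π (g t) ≤ 0) (hattain : ∀ t, ∃ π ∈ P t, dotp π (g t) = 0)
    (hge : ∀ t s, s ≠ t → ∀ π ∈ P s, 1 ≤ dotp π (g t)) (v : T → ℝ) {M : ℝ}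
    (hM : ∀ t, v t ≤ M) :
    FullExtraction P v (fun t s => v t + (M - v t) * g t s) := by
  intro t
  have hdot : ∀ s, ∀ π ∈ P t,
      dotp π (fun i => v s + (M - v s) * g s i) = v s + (M - v s) * dotp π (g s) :=
    fun s π hπ => dotp_const_add_mul (hP1 t π hπ) _ _ _
  refine ⟨fun π hπ => ?_, ?_, fun π hπ s hst => ?_⟩
  · rw [hdot t π hπ]
    nlinarith [hle t π hπ, hM t]
  · obtain ⟨π, hπ, hzero⟩ := hattain t
    exact ⟨π, hπ, by rw [hdot t π hπ, hzero, mul_zero, add_zero]⟩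
  · rw [hdot s π hπ]
    nlinarith [hge s t (Ne.symm hst) π hπ, hM s, hM t]

theorem stmt_1_general {S T : Type*} [Fintype S] [Fintype T]
    (P : T → Set (S → ℝ))
    (hne : ∀ t, (P t).Nonempty) (hcl : ∀ t, IsClosed (P t))
    (hcv : ∀ t, Convex ℝ (P t)) (hsub : ∀ t, P t ⊆ stdSimplex ℝ S)
    (hci : ∀ t : T, P t ∩ closure (convexHull ℝ (⋃ s ∈ {s : T | s ≠ t}, P s)) = ∅)
    (v : T → ℝ) :
    ∃ c : T → (S → ℝ), FullExtraction P v c := by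
  set K : T → Set (S → ℝ) := fun t => closure (convexHull ℝ (⋃ s ∈ {s : T | s ≠ t}, P s))
  have hK : ∀ t, K t ⊆ stdSimplex ℝ S := fun t =>
    (isClosed_stdSimplex ℝ S).closure_subset_iff.2 <|
      convexHull_min (Set.iUnion₂_subset fun s _ => hsub s) (convex_stdSimplex ℝ S)
  have hPK : ∀ t s, s ≠ t → P s ⊆ K t := fun t s hst =>
    (Set.subset_biUnion_of_mem (u := P) hst).trans <|
      (subset_convexHull ℝ _).trans subset_closure
  have hsep : ∀ t, ∃ g : S → ℝ, (∀ π ∈ P t, dotp π g ≤ 0) ∧ (∃ π ∈ P t, dotp π g = 0) ∧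
      ∀ π ∈ K t, 1 ≤ dotp π g := fun t =>
    exists_dotp_separation ((isCompact_stdSimplex ℝ S).of_isClosed_subset (hcl t) (hsub t))
      (hne t) (hcv t) isClosed_closure (convex_convexHull ℝ _).closure
      (Set.disjoint_iff_inter_eq_empty.2 (hci t)) (fun π hπ => (hsub t hπ).2)
      (fun π hπ => (hK t hπ).2)
  choose g hle hattain hge using hsep
  obtain ⟨M, hM⟩ := Finite.exists_le v
  exact ⟨_, fullExtraction_of_separating (fun t π hπ => (hsub t hπ).2) g hle hattain
    (fun t s hst π hπ => hge t π (hPK t s hst hπ)) v hM⟩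

theorem stmt_1 {S T : Type*} [Fintype S] [Fintype T] [Nonempty S] [Nonempty T]
    (P : T → Set (S → ℝ))
    (hne : ∀ t, (P t).Nonempty) (hcl : ∀ t, IsClosed (P t))
    (hcv : ∀ t, Convex ℝ (P t)) (hsub : ∀ t, P t ⊆ stdSimplex ℝ S)
    (hci : ∀ t : T, P t ∩ closure (convexHull ℝ (⋃ s ∈ {s : T | s ≠ t}, P s)) = ∅)
    (v : T → ℝ) :
    ∃ c : T → (S → ℝ), FullExtraction P v c :=
  stmt_1_general P hne hcl hcv hsub hci v
end
end

section
/- If the beliefs Π satisfy weak convex independence, then maximal full extraction holds: for every value function v : T → ℝ there exists a menu c : T → ℝ^S achieving maximal full extraction for (Π, v). -/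
/-!
Weak convex independence lets us separate each selected belief `p t` strictly from the other
selected beliefs by a linear functional `y t`. The contract offered to type `t` is an affine
function of `y t`, calibrated so that its expected cost under `p t` is exactly `v t`, and scaled
so that under any other selected belief `p s` its expected cost exceeds every rent. Type `t` then
weakly prefers its own contract under `p t` to every contract of the menu, hence to every mixture
of them, which is mixed-strategy maximality.
-/

noncomputable section

/-- The contract `c t` is mixed-strategy maximal for type `t` in the menu `c`:
no mixed strategy over the menu has strictly smaller expected cost for every belief in `P t`. -/
def MixedMaximal {S T : Type*} [Fintype S] [Fintype T]
    (P : T → Set (S → ℝ)) (c : T → (S → ℝ)) (t : T) : Prop :=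
  ¬ ∃ σ ∈ stdSimplex ℝ T, ∀ π ∈ P t, (∑ s, σ s * dotp π (c s)) < dotp π (c t)

open Finset

section

variable {S T : Type*} [Fintype S]

lemma dotp_mul_add_const {π : S → ℝ} (hπ : ∑ i, π i = 1) (a b : ℝ) (y : S → ℝ) :
    dotp π (fun i => a * y i + b) = a * dotp π y + b := by
  simp only [dotp, mul_add, sum_add_distrib, ← sum_mul, hπ, mul_left_comm _ a, ← mul_sum]
  ring

lemma exists_dotp_add_one_le_of_notMem_closure_convexHull {x : S → ℝ} {A : Set (S → ℝ)}
    (hx : x ∉ closure (convexHull ℝ A)) :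
    ∃ y : S → ℝ, ∀ a ∈ A, dotp x y + 1 ≤ dotp a y := by
  classical
  obtain ⟨f, u, hfx, hfA⟩ :=
    geometric_hahn_banach_point_closed (convex_convexHull ℝ A).closure isClosed_closure hx
  have hd : 0 < u - f x := sub_pos.2 hfx
  set y : S → ℝ := fun i => f (fun j => if i = j then 1 else 0) / (u - f x)
  have hdotp (z : S → ℝ) : dotp z y = f z / (u - f x) := by
    have hf := LinearMap.pi_apply_eq_sum_univ (f : (S → ℝ) →ₗ[ℝ] ℝ) z
    simp only [ContinuousLinearMap.coe_coe] at hf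
    simp only [hf, sum_div, dotp, y, smul_eq_mul, mul_div_assoc]
  refine ⟨y, fun a ha => ?_⟩
  have hfa : u < f a := hfA a (subset_closure (subset_convexHull ℝ A ha))
  rw [hdotp, hdotp, div_add_one hd.ne', div_le_div_iff_of_pos_right hd]
  linarith

variable [Fintype T]

lemma exists_menu_dotp_eq_and_le_of_forall_notMem {p : T → S → ℝ} (hp : ∀ t, ∑ i, p t i = 1)
    (hind : ∀ t, p t ∉ closure (convexHull ℝ (p '' {s | s ≠ t}))) (v : T → ℝ) :
    ∃ c : T → S → ℝ, ∀ t, dotp (p t) (c t) = v t ∧ ∀ s, dotp (p t) (c t) ≤ dotp (p t) (c s) := by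
  choose y hy using fun t => exists_dotp_add_one_le_of_notMem_closure_convexHull (hind t)
  obtain ⟨V, hV⟩ := Finite.bddAbove_range v
  have hvV : ∀ t, v t ≤ V := fun t => hV ⟨t, rfl⟩
  -- scaling the unit margin of `y s` by `V - v s ≥ 0` makes `c s` cost at least `V` off `p s`
  refine ⟨fun s i => (V - v s) * y s i + (v s - (V - v s) * dotp (p s) (y s)), fun t => ?_⟩
  simp only [dotp_mul_add_const (hp t)]
  refine ⟨by ring, fun s => ?_⟩
  rcases eq_or_ne s t with rfl | hst
  · linarith
  · have hsep := hy s (p t) ⟨t, hst.symm, rfl⟩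
    nlinarith [hvV s, hvV t]

lemma MixedMaximal.of_forall_dotp_le {P : T → Set (S → ℝ)} {c : T → S → ℝ} {t : T} {π : S → ℝ}
    (hπ : π ∈ P t) (hle : ∀ s, dotp π (c t) ≤ dotp π (c s)) : MixedMaximal P c t := by
  rintro ⟨σ, hσ, hlt⟩
  have hmix : dotp π (c t) ≤ ∑ s, σ s * dotp π (c s) := calc
    dotp π (c t) = ∑ s, σ s * dotp π (c t) := by rw [← sum_mul, hσ.2, one_mul]
    _ ≤ ∑ s, σ s * dotp π (c s) :=
      sum_le_sum fun s _ => mul_le_mul_of_nonneg_left (hle s) (hσ.1 s)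
  exact (hlt π hπ).not_ge hmix

end

theorem stmt_3_general {S T : Type*} [Fintype S] [Fintype T]
    (P : T → Set (S → ℝ))
    (hsub : ∀ t, P t ⊆ stdSimplex ℝ S)
    (hwci : ∃ p : T → (S → ℝ), (∀ t, p t ∈ P t) ∧
      ∀ t, p t ∉ closure (convexHull ℝ (p '' {s | s ≠ t})))
    (v : T → ℝ) :
    ∃ c : T → (S → ℝ), ∀ t : T,
      MixedMaximal P c t ∧ ∃ π ∈ P t, dotp π (c t) = v t := by
  obtain ⟨p, hp, hind⟩ := hwci
  obtain ⟨c, hc⟩ := exists_menu_dotp_eq_and_le_of_forall_notMem (fun t => (hsub t (hp t)).2) hind v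
  exact ⟨c, fun t => ⟨MixedMaximal.of_forall_dotp_le (hp t) (hc t).2, p t, hp t, (hc t).1⟩⟩

theorem stmt_3 {S T : Type*} [Fintype S] [Fintype T] [Nonempty S] [Nonempty T]
    (P : T → Set (S → ℝ))
    (hne : ∀ t, (P t).Nonempty) (hcl : ∀ t, IsClosed (P t))
    (hcv : ∀ t, Convex ℝ (P t)) (hsub : ∀ t, P t ⊆ stdSimplex ℝ S)
    (hwci : ∃ p : T → (S → ℝ), (∀ t, p t ∈ P t) ∧
      ∀ t, p t ∉ closure (convexHull ℝ (p '' {s | s ≠ t})))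
    (v : T → ℝ) :
    ∃ c : T → (S → ℝ), ∀ t : T,
      MixedMaximal P c t ∧ ∃ π ∈ P t, dotp π (c t) = v t :=
  stmt_3_general P hsub hwci v
end
end

section
/- Suppose T has at least two elements and the beliefs Π satisfy convex dependence. Then optimal full extraction fails: there exists a value function v : T → ℝ such that no menu c : T → ℝ^S achieves optimal full extraction for (Π, v). -/
noncomputable section

/-- The contract `c t` is mixed-strategy optimal for type `t` in the menu `c`. -/
def MixedOptimal {S T : Type*} [Fintype S] [Fintype T]
    (P : T → Set (S → ℝ)) (c : T → (S → ℝ)) (t : T) : Prop :=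
  ∀ σ ∈ stdSimplex ℝ T, ∀ π ∈ P t, dotp π (c t) ≤ ∑ s, σ s * dotp π (c s)

/-- A menu `c` achieves optimal full extraction for beliefs `P` and values `v`. -/
def OptimalFullExtraction {S T : Type*} [Fintype S] [Fintype T]
    (P : T → Set (S → ℝ)) (v : T → ℝ) (c : T → (S → ℝ)) : Prop :=
  ∀ t : T, MixedOptimal P c t ∧ (∀ π ∈ P t, dotp π (c t) ≤ v t) ∧
    (∃ π ∈ P t, dotp π (c t) = v t)

/-!
Convex dependence gives a type `s ≠ t` with `Π(s) ⊆ Π(t)`. Mixed-strategy optimality for `s`,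
tested against the pure deviation to `c t`, yields `π·c(s) ≤ π·c(t)` for every `π ∈ Π(s)`, and
`π·c(t) ≤ v(t)` since `π ∈ Π(t)`. So `v(s)`, which `π·c(s)` must attain somewhere on `Π(s)`,
is at most `v(t)`; any `v` with `v(t) < v(s)` defeats full extraction.
-/

theorem subset_of_closure_convexHull_biUnion_subset {E T : Type*} [AddCommGroup E] [Module ℝ E]
    [TopologicalSpace E] {P : T → Set E} {t s : T} (hs : s ≠ t)
    (ht : closure (convexHull ℝ (⋃ u ∈ {u : T | u ≠ t}, P u)) ⊆ P t) : P s ⊆ P t :=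
  fun _ hπ => ht (subset_closure (subset_convexHull ℝ _ (Set.mem_biUnion hs hπ)))

theorem MixedOptimal.dotp_le {S T : Type*} [Fintype S] [Fintype T]
    {P : T → Set (S → ℝ)} {c : T → S → ℝ} {t : T} (h : MixedOptimal P c t) (u : T)
    {π : S → ℝ} (hπ : π ∈ P t) : dotp π (c t) ≤ dotp π (c u) := by
  classical
  simpa [Pi.single_apply] using h _ (single_mem_stdSimplex ℝ u) π hπ

theorem not_optimalFullExtraction_of_subset {S T : Type*} [Fintype S] [Fintype T]
    {P : T → Set (S → ℝ)} {v : T → ℝ} {s t : T} (hP : P s ⊆ P t) (hv : v t < v s)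
    (c : T → S → ℝ) : ¬ OptimalFullExtraction P v c := by
  intro hc
  obtain ⟨hopt, -, π, hπ, hπv⟩ := hc s
  have hdev : dotp π (c s) ≤ dotp π (c t) := hopt.dotp_le t hπ
  have hcap : dotp π (c t) ≤ v t := (hc t).2.1 π (hP hπ)
  linarith

theorem stmt_5_general {S T : Type*} [Fintype S] [Fintype T] [Nontrivial T]
    (P : T → Set (S → ℝ))
    (hcd : ∃ t : T, closure (convexHull ℝ (⋃ s ∈ {s : T | s ≠ t}, P s)) ⊆ P t) :
    ∃ v : T → ℝ, ∀ c : T → (S → ℝ), ¬ OptimalFullExtraction P v c := by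
  classical
  obtain ⟨t, ht⟩ := hcd
  obtain ⟨s, hs⟩ := exists_ne t
  refine ⟨Pi.single s 1, not_optimalFullExtraction_of_subset
    (subset_of_closure_convexHull_biUnion_subset hs ht) ?_⟩
  simp [hs.symm]

theorem stmt_5 {S T : Type*} [Fintype S] [Fintype T] [Nonempty S] [Nontrivial T]
    (P : T → Set (S → ℝ))
    (hne : ∀ t, (P t).Nonempty) (hcl : ∀ t, IsClosed (P t))
    (hcv : ∀ t, Convex ℝ (P t)) (hsub : ∀ t, P t ⊆ stdSimplex ℝ S)
    (hcd : ∃ t : T, closure (convexHull ℝ (⋃ s ∈ {s : T | s ≠ t}, P s)) ⊆ P t) :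
    ∃ v : T → ℝ, ∀ c : T → (S → ℝ), ¬ OptimalFullExtraction P v c :=
  stmt_5_general P hcd
end
end

section
/- Let c : T → ℝ^S be an incentive compatible menu for the beliefs Π, and let t, t' ∈ T. If Π(t) ∩ Π(t') has full dimension, then c(t) = c(t'). -/
noncomputable section

/-- A set `A ⊆ ℝ^S` has full dimension if the only vector orthogonal to all of `A` is `0`. -/
def FullDim {S : Type*} [Fintype S] (A : Set (S → ℝ)) : Prop :=
  ∀ x : S → ℝ, (∀ a ∈ A, dotp a x = 0) → x = 0

theorem dotp_sub_right {S : Type*} [Fintype S] (a x y : S → ℝ) :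
    dotp a (x - y) = dotp a x - dotp a y := by
  simp only [dotp, Pi.sub_apply, mul_sub, Finset.sum_sub_distrib]

theorem FullDim.eq_of_dotp_eq {S : Type*} [Fintype S] {A : Set (S → ℝ)} (hA : FullDim A)
    {x y : S → ℝ} (h : ∀ a ∈ A, dotp a x = dotp a y) : x = y :=
  sub_eq_zero.mp <| hA (x - y) fun a ha => by rw [dotp_sub_right, h a ha, sub_self]

theorem stmt_6_general {S T : Type*} [Fintype S]
    (P : T → Set (S → ℝ))
    (c : T → (S → ℝ))
    (hic : ∀ t s : T, ∀ π ∈ P t, dotp π (c t) ≤ dotp π (c s))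
    (t t' : T) (hfd : FullDim (P t ∩ P t')) :
    c t = c t' :=
  hfd.eq_of_dotp_eq fun π hπ => (hic t t' π hπ.1).antisymm (hic t' t π hπ.2)

theorem stmt_6 {S T : Type*} [Fintype S] [Fintype T] [Nonempty S] [Nonempty T]
    (P : T → Set (S → ℝ))
    (hne : ∀ t, (P t).Nonempty) (hcl : ∀ t, IsClosed (P t))
    (hcv : ∀ t, Convex ℝ (P t)) (hsub : ∀ t, P t ⊆ stdSimplex ℝ S)
    (c : T → (S → ℝ))
    (hic : ∀ t s : T, ∀ π ∈ P t, dotp π (c t) ≤ dotp π (c s))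
    (t t' : T) (hfd : FullDim (P t ∩ P t')) :
    c t = c t' :=
  stmt_6_general P c hic t t' hfd
end
end

section
/- If the beliefs Π are fully overlapping and the menu c : T → ℝ^S is incentive compatible, then c(t) = c(t') for all t, t' ∈ T; i.e. the menu consists of a single contract. -/
noncomputable section

theorem stmt_7_general {S T : Type*} [Fintype S]
    (P : T → Set (S → ℝ))
    (hov : ∀ t t' : T, FullDim (P t ∩ P t'))
    (c : T → (S → ℝ))
    (hic : ∀ t s : T, ∀ π ∈ P t, dotp π (c t) ≤ dotp π (c s)) :
    ∀ t t' : T, c t = c t' := by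
  intro t t'
  -- a belief shared by `t` and `t'` makes each type indifferent between the two contracts
  exact (hov t t').eq_of_dotp_eq fun π ⟨hπt, hπt'⟩ =>
    le_antisymm (hic t t' π hπt) (hic t' t π hπt')

theorem stmt_7 {S T : Type*} [Fintype S] [Fintype T] [Nonempty S] [Nonempty T]
    (P : T → Set (S → ℝ))
    (hne : ∀ t, (P t).Nonempty) (hcl : ∀ t, IsClosed (P t))
    (hcv : ∀ t, Convex ℝ (P t)) (hsub : ∀ t, P t ⊆ stdSimplex ℝ S)
    (hov : ∀ t t' : T, FullDim (P t ∩ P t'))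
    (c : T → (S → ℝ))
    (hic : ∀ t s : T, ∀ π ∈ P t, dotp π (c t) ≤ dotp π (c s)) :
    ∀ t t' : T, c t = c t' :=
  stmt_7_general P hov c hic
end
end

section
/- Let T* ⊆ T and suppose Π(t) ∩ Π(t') has full dimension for every t, t' ∈ T*. If the menu c : T* → ℝ^S is incentive compatible for T*, then c(t) = c(t') for all t, t' ∈ T*. -/
noncomputable section

theorem stmt_8_general {S T : Type*} [Fintype S]
    (P : T → Set (S → ℝ))
    (Ts : Set T)
    (hov : ∀ t ∈ Ts, ∀ t' ∈ Ts, FullDim (P t ∩ P t'))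
    (c : T → (S → ℝ))
    (hic : ∀ t ∈ Ts, ∀ s ∈ Ts, ∀ π ∈ P t, dotp π (c t) ≤ dotp π (c s)) :
    ∀ t ∈ Ts, ∀ t' ∈ Ts, c t = c t' := by
  intro t ht t' ht'
  exact (hov t ht t' ht').eq_of_dotp_eq fun π hπ =>
    le_antisymm (hic t ht t' ht' π hπ.1) (hic t' ht' t ht π hπ.2)

theorem stmt_8 {S T : Type*} [Fintype S] [Fintype T] [Nonempty S] [Nonempty T]
    (P : T → Set (S → ℝ))
    (hne : ∀ t, (P t).Nonempty) (hcl : ∀ t, IsClosed (P t))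
    (hcv : ∀ t, Convex ℝ (P t)) (hsub : ∀ t, P t ⊆ stdSimplex ℝ S)
    (Ts : Set T)
    (hov : ∀ t ∈ Ts, ∀ t' ∈ Ts, FullDim (P t ∩ P t'))
    (c : T → (S → ℝ))
    (hic : ∀ t ∈ Ts, ∀ s ∈ Ts, ∀ π ∈ P t, dotp π (c t) ≤ dotp π (c s)) :
    ∀ t ∈ Ts, ∀ t' ∈ Ts, c t = c t' :=
  stmt_8_general P Ts hov c hic
end
end

section
/- Let π : T → Δ(S) be point beliefs satisfying convex independence. Then there exists ε ∈ (0,1) such that for the ε-contaminated beliefs Π_ε, full extraction holds: for every value function v : T → ℝ there is a menu c : T → ℝ^S achieving full extraction for (Π_ε, v). -/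
noncomputable section

/-- The ε-contamination of the point beliefs `p`. -/
def contaminated {S T : Type*} [Fintype S] (p : T → (S → ℝ)) (ε : ℝ) (t : T) :
    Set (S → ℝ) :=
  {x | ∃ q ∈ stdSimplex ℝ S, x = (1 - ε) • p t + ε • q}

theorem stmt_10 {S T : Type*} [Fintype S] [Fintype T] [Nonempty S] [Nonempty T]
    (p : T → (S → ℝ)) (hp : ∀ t, p t ∈ stdSimplex ℝ S)
    (hci : ∀ t : T, p t ∉ closure (convexHull ℝ (p '' {s | s ≠ t}))) :
    ∃ ε : ℝ, 0 < ε ∧ ε < 1 ∧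
      ∀ v : T → ℝ, ∃ c : T → (S → ℝ), FullExtraction (contaminated p ε) v c := by
  classical
  have hTne : (Finset.univ : Finset T).Nonempty := Finset.univ_nonempty
  have hSne : (Finset.univ : Finset S).Nonempty := Finset.univ_nonempty
  -- separation
  have hsep : ∀ t : T, ∃ (f : (S → ℝ) →L[ℝ] ℝ) (u : ℝ),
      f (p t) < u ∧ ∀ b ∈ closure (convexHull ℝ (p '' {s | s ≠ t})), u < f b := by
    intro t
    exact geometric_hahn_banach_point_closed ((convex_convexHull ℝ _).closure)
      isClosed_closure (hci t)
  choose f u hfu hs using hsep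
  set a : T → S → ℝ := fun t i => f t (fun j => if i = j then 1 else 0) with ha
  have hfa : ∀ (t : T) (x : S → ℝ), f t x = dotp x (a t) := by
    intro t x
    have hx : x = ∑ i, x i • fun j => if i = j then (1:ℝ) else 0 := pi_eq_sum_univ x
    calc f t x = f t (∑ i, x i • fun j => if i = j then (1:ℝ) else 0) := by rw [← hx]
      _ = ∑ i, x i * a t i := by
          rw [map_sum]
          exact Finset.sum_congr rfl fun i _ => by rw [map_smul, smul_eq_mul]
      _ = dotp x (a t) := rfl
  set A : T → ℝ := fun t => Finset.univ.sup' hSne (a t) with hA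
  set B : T → ℝ := fun t => Finset.univ.inf' hSne (a t) with hB
  set δ : T → ℝ := fun t => u t - f t (p t) with hδdef
  have hδ : ∀ t, 0 < δ t := fun t => sub_pos.mpr (hfu t)
  have hBA : ∀ t, B t ≤ A t := fun t =>
    le_trans (Finset.inf'_le (a t) (Finset.mem_univ (Classical.arbitrary S)))
      (Finset.le_sup' (a t) (Finset.mem_univ (Classical.arbitrary S)))
  set ε : ℝ := min (1/2) (Finset.univ.inf' hTne (fun t => δ t / (δ t + (A t - B t) + 1)))
    with hεdef
  have hε0 : 0 < ε := by
    refine lt_min (by norm_num) ?_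
    rw [Finset.lt_inf'_iff]
    intro t _
    have h1 : 0 < δ t + (A t - B t) + 1 := by
      have := hδ t; have := hBA t; linarith
    exact div_pos (hδ t) h1
  have hε1 : ε < 1 := lt_of_le_of_lt (min_le_left _ _) (by norm_num)
  have hη : ∀ t, 0 < (1 - ε) * δ t + ε * (B t - A t) := by
    intro t
    have h1 : 0 < δ t + (A t - B t) + 1 := by
      have := hδ t; have := hBA t; linarith
    have h2 : ε ≤ δ t / (δ t + (A t - B t) + 1) :=
      le_trans (min_le_right _ _) (Finset.inf'_le _ (Finset.mem_univ t))
    have h3 : ε * (δ t + (A t - B t) + 1) ≤ δ t := by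
      rw [← le_div_iff₀ h1]; exact h2
    nlinarith [hε0, hδ t, hBA t]
  refine ⟨ε, hε0, hε1, fun v => ?_⟩
  -- auxiliary facts about dotp
  have dlin : ∀ (x y w : S → ℝ) (r s : ℝ),
      dotp (r • x + s • y) w = r * dotp x w + s * dotp y w := by
    intro x y w r s
    simp only [dotp, Pi.add_apply, Pi.smul_apply, smul_eq_mul]
    rw [Finset.mul_sum, Finset.mul_sum, ← Finset.sum_add_distrib]
    exact Finset.sum_congr rfl fun i _ => by ring
  have expand : ∀ (x : S → ℝ), (∑ i, x i = 1) → ∀ (w : S → ℝ) (K μ : ℝ),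
      dotp x (fun i => K * w i + μ) = K * dotp x w + μ := by
    intro x hx w K μ
    have : dotp x (fun i => K * w i + μ) = K * (∑ i, x i * w i) + μ * ∑ i, x i := by
      simp only [dotp]
      rw [Finset.mul_sum, Finset.mul_sum, ← Finset.sum_add_distrib]
      exact Finset.sum_congr rfl fun i _ => by ring
    rw [this, hx, mul_one]; rfl
  have hmemsum : ∀ (t : T) (q : S → ℝ), q ∈ stdSimplex ℝ S →
      ∑ i, ((1 - ε) • p t + ε • q) i = 1 := by
    intro t q hq
    simp only [Pi.add_apply, Pi.smul_apply, smul_eq_mul]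
    rw [Finset.sum_add_distrib, ← Finset.mul_sum, ← Finset.mul_sum, (hp t).2, hq.2]
    ring
  have hdotA : ∀ (s : T) (q : S → ℝ), q ∈ stdSimplex ℝ S → dotp q (a s) ≤ A s := by
    intro s q hq
    calc dotp q (a s) = ∑ i, q i * a s i := rfl
      _ ≤ ∑ i, q i * A s := Finset.sum_le_sum fun i _ =>
          mul_le_mul_of_nonneg_left (Finset.le_sup' (a s) (Finset.mem_univ i)) (hq.1 i)
      _ = A s := by rw [← Finset.sum_mul, hq.2, one_mul]
  have hdotB : ∀ (s : T) (q : S → ℝ), q ∈ stdSimplex ℝ S → B s ≤ dotp q (a s) := by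
    intro s q hq
    calc B s = ∑ i, q i * B s := by rw [← Finset.sum_mul, hq.2, one_mul]
      _ ≤ ∑ i, q i * a s i := Finset.sum_le_sum fun i _ =>
          mul_le_mul_of_nonneg_left (Finset.inf'_le (a s) (Finset.mem_univ i)) (hq.1 i)
      _ = dotp q (a s) := rfl
  -- constants depending on v
  set η : T → ℝ := fun t => (1 - ε) * δ t + ε * (B t - A t) with hηdef
  set ηm : ℝ := Finset.univ.inf' hTne η with hηm
  have hηm0 : 0 < ηm := by
    rw [hηm, Finset.lt_inf'_iff]; intro t _; exact hη t
  set Vmax : ℝ := Finset.univ.sup' hTne v with hVmax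
  set Vmin : ℝ := Finset.univ.inf' hTne v with hVmin
  set K : ℝ := max 0 ((Vmax - Vmin) / ηm) with hKdef
  have hK0 : 0 ≤ K := le_max_left _ _
  have hKts : ∀ t s : T, v t - v s ≤ K * η s := by
    intro t s
    have h1 : v t - v s ≤ Vmax - Vmin := by
      have := Finset.le_sup' v (Finset.mem_univ t)
      have := Finset.inf'_le v (Finset.mem_univ s)
      simp only [hVmax, hVmin]; linarith [Finset.le_sup' v (Finset.mem_univ t),
        Finset.inf'_le v (Finset.mem_univ s)]
    have h2 : Vmax - Vmin ≤ K * ηm := by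
      have : (Vmax - Vmin) / ηm ≤ K := le_max_right _ _
      calc Vmax - Vmin = (Vmax - Vmin) / ηm * ηm := by field_simp
        _ ≤ K * ηm := mul_le_mul_of_nonneg_right this hηm0.le
    have h3 : K * ηm ≤ K * η s :=
      mul_le_mul_of_nonneg_left (Finset.inf'_le η (Finset.mem_univ s)) hK0
    linarith
  set G : T → ℝ := fun t => (1 - ε) * f t (p t) + ε * A t with hG
  refine ⟨fun t i => K * a t i + (v t - K * G t), fun t => ?_⟩
  have hcompute : ∀ (t s : T) (q : S → ℝ), q ∈ stdSimplex ℝ S →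
      dotp ((1 - ε) • p t + ε • q) (fun i => K * a s i + (v s - K * G s)) =
        K * ((1 - ε) * f s (p t) + ε * dotp q (a s)) + (v s - K * G s) := by
    intro t s q hq
    rw [expand _ (hmemsum t q hq), dlin, ← hfa]
  refine ⟨?_, ?_, ?_⟩
  · rintro π ⟨q, hq, rfl⟩
    rw [hcompute t t q hq]
    have h1 : dotp q (a t) ≤ A t := hdotA t q hq
    have h2 : (1 - ε) * f t (p t) + ε * dotp q (a t) ≤ G t := by
      simp only [hG]; nlinarith [hε0]
    nlinarith [hK0]
  · obtain ⟨i, _, hi⟩ := Finset.exists_mem_eq_sup' hSne (a t)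
    set q : S → ℝ := fun j => if j = i then 1 else 0 with hqdef
    have hq : q ∈ stdSimplex ℝ S := by
      constructor
      · intro j; simp only [hqdef]; split <;> norm_num
      · simp [hqdef]
    refine ⟨(1 - ε) • p t + ε • q, ⟨q, hq, rfl⟩, ?_⟩
    have hqa : dotp q (a t) = a t i := by
      simp [dotp, hqdef, ite_mul]
    rw [hcompute t t q hq, hqa, ← hi]
    simp only [hG, hA]
    ring
  · rintro π ⟨q, hq, rfl⟩ s hst
    rw [hcompute t s q hq]
    have hpt : u s < f s (p t) := by
      apply hs s
      apply subset_closure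
      exact subset_convexHull ℝ _ ⟨t, hst.symm, rfl⟩
    have h1 : B s ≤ dotp q (a s) := hdotB s q hq
    have h2 : v t - v s ≤ K * η s := hKts t s
    have hδs : δ s = u s - f s (p s) := rfl
    have hηs : η s = (1 - ε) * δ s + ε * (B s - A s) := rfl
    have hGs : G s = (1 - ε) * f s (p s) + ε * A s := rfl
    have e1 : K * (1 - ε) * u s ≤ K * (1 - ε) * f s (p t) :=
      mul_le_mul_of_nonneg_left hpt.le (mul_nonneg hK0 (by linarith))
    have e2 : K * ε * B s ≤ K * ε * dotp q (a s) :=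
      mul_le_mul_of_nonneg_left h1 (mul_nonneg hK0 hε0.le)
    have e3 : K * η s = K * (1 - ε) * u s - K * (1 - ε) * f s (p s)
        + K * ε * B s - K * ε * A s := by rw [hηs, hδs]; ring
    have e4 : K * ((1 - ε) * f s (p t) + ε * dotp q (a s)) + (v s - K * G s)
        = K * (1 - ε) * f s (p t) + K * ε * dotp q (a s) + v s
          - K * (1 - ε) * f s (p s) - K * ε * A s := by rw [hGs]; ring
    linarith
end
end

section
/- Suppose |S| ≥ |T| ≥ 2. For every ε ∈ (0,1) there exists a nonempty open subset O ⊆ Δ(S)^T (product topology) such that every tuple π = (π(t))_{t∈T} ∈ O satisfies convex independence, and yet there exist contamination levels ε_t ∈ (0, ε] (t ∈ T) and a value function v : T → ℝ such that no menu c : T → ℝ^S achieves full extraction for the beliefs t ↦ Π_{ε_t}(t). -/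
noncomputable section

/-!
Fix an embedding `ι : T ↪ S` and write `n = |S|`. Near the tuple whose `t`-th belief is the uniform
belief `u` with a small bump at `ι t`, the belief `p t` exceeds `1/n` at the coordinate `ι t` while
every other belief stays below `1/n` there; this hyperplane separates `p t` from the convex hull of
the others. Yet every `(1 - ε) • p t` lies below `u`, so `u` belongs to all the ε-contaminations.
A belief shared by two types `t₁ ≠ t₂` forces `v t₁ ≤ u · c t₂ ≤ v t₂`, which fails once
`v t₂ < v t₁`.
-/

section Separation

variable {E : Type*} [AddCommGroup E] [Module ℝ E] [TopologicalSpace E]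

theorem notMem_closure_convexHull_of_le_of_lt (f : E →L[ℝ] ℝ) {A : Set E} {x : E} {θ : ℝ}
    (hA : ∀ a ∈ A, f a ≤ θ) (hx : θ < f x) : x ∉ closure (convexHull ℝ A) := by
  have hsub : closure (convexHull ℝ A) ⊆ {y | f y ≤ θ} :=
    closure_minimal (convexHull_min hA (convex_halfSpace_le f.toLinearMap.isLinear θ))
      (isClosed_le f.continuous continuous_const)
  exact fun hmem => (hsub hmem).not_gt hx

end Separation

section Extraction

variable {S T : Type*} [Fintype S]

theorem not_fullExtraction_of_mem_inter [Fintype T] {P : T → Set (S → ℝ)} {v : T → ℝ}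
    {t₁ t₂ : T} (hne : t₁ ≠ t₂) (hv : v t₂ < v t₁) {x : S → ℝ} (hx₁ : x ∈ P t₁)
    (hx₂ : x ∈ P t₂) (c : T → S → ℝ) : ¬ FullExtraction P v c := by
  intro hc
  have hbelow := (hc t₂).1 x hx₂
  have habove := (hc t₁).2.2 x hx₁ t₂ hne.symm
  linarith

theorem mem_contaminated_of_le {p : T → S → ℝ} {ε : ℝ} {t : T} {x : S → ℝ}
    (hε : 0 < ε) (hp : ∑ s, p t s = 1) (hx : ∑ s, x s = 1)
    (hle : ∀ s, (1 - ε) * p t s ≤ x s) : x ∈ contaminated p ε t := by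
  refine ⟨ε⁻¹ • (x - (1 - ε) • p t), ⟨fun s => ?_, ?_⟩, ?_⟩
  · simpa using mul_nonneg (inv_nonneg.2 hε.le) (sub_nonneg.2 (hle s))
  · simp only [Pi.smul_apply, Pi.sub_apply, smul_eq_mul, ← Finset.mul_sum,
      Finset.sum_sub_distrib, hx, hp]
    field_simp
    ring
  · rw [smul_smul, mul_inv_cancel₀ hε.ne', one_smul, add_sub_cancel]

end Extraction

section PeakedBeliefs

variable {S T : Type*} [Fintype S]

theorem const_inv_card_mem_stdSimplex [Nonempty S] :
    (fun _ => (Fintype.card S : ℝ)⁻¹) ∈ stdSimplex ℝ S :=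
  ⟨fun _ => by positivity, by simp⟩

def peakedBeliefs (ε : ℝ) (ι : T → S) : Set (T → S → ℝ) :=
  {p | ∀ t, (Fintype.card S : ℝ)⁻¹ < p t (ι t) ∧
    ∀ k, (1 - ε) * p t k < (Fintype.card S : ℝ)⁻¹ ∧ (k ≠ ι t → p t k < (Fintype.card S : ℝ)⁻¹)}

theorem isOpen_peakedBeliefs [Finite T] (ε : ℝ) (ι : T → S) : IsOpen (peakedBeliefs ε ι) := by
  simp only [peakedBeliefs, Set.ofPred_forall, Set.ofPred_and]
  refine isOpen_iInter_of_finite fun t => (isOpen_lt continuous_const (by fun_prop)).inter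
    (isOpen_iInter_of_finite fun k => (isOpen_lt (by fun_prop) continuous_const).inter
      (isOpen_iInter_of_finite fun _ => isOpen_lt (by fun_prop) continuous_const))

theorem notMem_closure_convexHull_of_mem_peakedBeliefs {ε : ℝ} {ι : T → S}
    (hι : Function.Injective ι) {p : T → S → ℝ} (hp : p ∈ peakedBeliefs ε ι) (t : T) :
    p t ∉ closure (convexHull ℝ (p '' {s | s ≠ t})) := by
  refine notMem_closure_convexHull_of_le_of_lt (ContinuousLinearMap.proj (ι t)) ?_ (hp t).1
  rintro _ ⟨s, hst, rfl⟩
  exact ((hp s).2 (ι t)).2 (hι.ne (Ne.symm hst)) |>.le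

theorem const_inv_card_mem_contaminated [Nonempty S] {ε : ℝ} (hε : 0 < ε) {ι : T → S}
    {p : T → S → ℝ} (hp : p ∈ peakedBeliefs ε ι) {t : T} (hpt : p t ∈ stdSimplex ℝ S) :
    (fun _ => (Fintype.card S : ℝ)⁻¹) ∈ contaminated p ε t :=
  mem_contaminated_of_le hε hpt.2 const_inv_card_mem_stdSimplex.2 fun k => ((hp t).2 k).1.le

variable [DecidableEq S]

def bumpedUniform (r : ℝ) (i : S) : S → ℝ :=
  (1 - r) • (fun _ => (Fintype.card S : ℝ)⁻¹) + r • Pi.single i 1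

theorem bumpedUniform_mem_stdSimplex [Nonempty S] {r : ℝ} (h₀ : 0 ≤ r) (h₁ : r ≤ 1) (i : S) :
    bumpedUniform r i ∈ stdSimplex ℝ S :=
  convex_stdSimplex ℝ S const_inv_card_mem_stdSimplex (single_mem_stdSimplex ℝ i)
    (sub_nonneg.2 h₁) h₀ (sub_add_cancel 1 r)

theorem bumpedUniform_apply (r : ℝ) (i k : S) :
    bumpedUniform r i k = (1 - r) * (Fintype.card S : ℝ)⁻¹ + if k = i then r else 0 := by
  simp [bumpedUniform, Pi.single_apply]

theorem bumpedUniform_mem_peakedBeliefs (hS : 2 ≤ Fintype.card S) {ε : ℝ} (hε₀ : 0 < ε)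
    (hε₁ : ε < 1) (ι : T → S) :
    (fun t => bumpedUniform (ε / Fintype.card S) (ι t)) ∈ peakedBeliefs ε ι := by
  have hn : (2 : ℝ) ≤ Fintype.card S := by exact_mod_cast hS
  have hn₀ : (0 : ℝ) < Fintype.card S := by linarith
  intro t
  simp only [bumpedUniform_apply]
  refine ⟨?_, fun k => ?_⟩
  · rw [if_true]
    field_simp
    nlinarith
  · split_ifs with hk
    · refine ⟨?_, (absurd hk ·)⟩
      -- the peak is `(1 + ε - ε / n) / n`, and `(1 - ε) (1 + ε) < 1`
      field_simp
      nlinarith [mul_pos hε₀ (sub_pos.2 hε₁), mul_pos hn₀ (mul_pos hε₀ hε₀)]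
    · refine ⟨?_, fun _ => ?_⟩
      · field_simp
        nlinarith
      · field_simp
        nlinarith

end PeakedBeliefs

theorem stmt_12_general {S T : Type*} [Fintype S] [Fintype T] [Nonempty S]
    (hST : Fintype.card T ≤ Fintype.card S) (hT : 2 ≤ Fintype.card T)
    (ε : ℝ) (hε0 : 0 < ε) (hε1 : ε < 1) :
    ∃ U : Set (T → (S → ℝ)), IsOpen U ∧
      (∃ p ∈ U, ∀ t, p t ∈ stdSimplex ℝ S) ∧
      ∀ p ∈ U, (∀ t, p t ∈ stdSimplex ℝ S) →
        ((∀ t : T, p t ∉ closure (convexHull ℝ (p '' {s | s ≠ t}))) ∧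
          ∃ εt : T → ℝ, (∀ t, 0 < εt t ∧ εt t ≤ ε) ∧
            ∃ v : T → ℝ, ∀ c : T → (S → ℝ),
              ¬ FullExtraction (fun t => contaminated p (εt t) t) v c) := by
  classical
  obtain ⟨ι⟩ : Nonempty (T ↪ S) := Function.Embedding.nonempty_of_card_le hST
  obtain ⟨t₁, t₂, hne⟩ := Fintype.exists_pair_of_one_lt_card hT
  have hr : ε / Fintype.card S ≤ 1 :=
    div_le_one_of_le₀ (hε1.le.trans (by exact_mod_cast Fintype.card_pos)) (by positivity)
  refine ⟨peakedBeliefs ε ι, isOpen_peakedBeliefs ε ι,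
    ⟨_, bumpedUniform_mem_peakedBeliefs (hT.trans hST) hε0 hε1 ι,
      fun t => bumpedUniform_mem_stdSimplex (by positivity) hr (ι t)⟩,
    fun p hp hpS => ⟨notMem_closure_convexHull_of_mem_peakedBeliefs ι.injective hp,
      fun _ => ε, fun _ => ⟨hε0, le_rfl⟩, fun t => if t = t₁ then 1 else 0, ?_⟩⟩
  exact not_fullExtraction_of_mem_inter hne (by simp [hne.symm])
    (const_inv_card_mem_contaminated hε0 hp (hpS t₁))
    (const_inv_card_mem_contaminated hε0 hp (hpS t₂))

/-- A nonempty open subset of `Δ(S)^T` (with the product topology), on which every tuple of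
point beliefs satisfies convex independence and yet full extraction fails for suitable
contamination levels `ε_t ∈ (0, ε]`.  Relatively open subsets of `Δ(S)^T` are exactly the
intersections of open subsets of the ambient product space with `Δ(S)^T`. -/
theorem stmt_12 {S T : Type*} [Fintype S] [Fintype T] [Nonempty S] [Nonempty T]
    (hST : Fintype.card T ≤ Fintype.card S) (hT : 2 ≤ Fintype.card T)
    (ε : ℝ) (hε0 : 0 < ε) (hε1 : ε < 1) :
    ∃ U : Set (T → (S → ℝ)), IsOpen U ∧
      (∃ p ∈ U, ∀ t, p t ∈ stdSimplex ℝ S) ∧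
      ∀ p ∈ U, (∀ t, p t ∈ stdSimplex ℝ S) →
        ((∀ t : T, p t ∉ closure (convexHull ℝ (p '' {s | s ≠ t}))) ∧
          ∃ εt : T → ℝ, (∀ t, 0 < εt t ∧ εt t ≤ ε) ∧
            ∃ v : T → ℝ, ∀ c : T → (S → ℝ),
              ¬ FullExtraction (fun t => contaminated p (εt t) t) v c) :=
  stmt_12_general hST hT ε hε0 hε1
end
end

section
/- Suppose |S| ≥ |T| ≥ 2. For every ε ∈ (0,1] there exists a nonempty open subset O ⊆ Δ(S)^T (product topology) such that every tuple π = (π(t))_{t∈T} ∈ O satisfies convex independence, and for the ε-contaminated beliefs Π_ε every incentive compatible menu c : T → ℝ^S satisfies c(t) = c(t') for all t, t' ∈ T. -/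
/-!
Fix an injection `ι : T ↪ S`. If every type `t` puts strictly more weight on the state `ι t` than
every other type does, the coordinate `ι t` separates `p t` from the convex hull of the other
beliefs, which gives convex independence. If moreover all beliefs are close in `ℓ¹`, namely
`(1 - ε) ‖p t - p t'‖₁ < ε`, incentive compatibility makes menus coincide: let `d = c t - c t'`;
testing `t` against `(1 - ε) p t + ε δ_j` with `j` maximizing `d`, testing `t'` against
`(1 - ε) p t' + ε δ_k` with `k` minimizing `d`, and adding, gives
`ε (max d - min d) ≤ (1 - ε) (p t' - p t) ⬝ d ≤ (1 - ε) ‖p t - p t'‖₁ (max d - min d)`,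
so `d` is constant, and the same two inequalities then force the constant to be `0`.
Both conditions are open and hold for `p t = (1 - ε/2) u + (ε/2) δ_{ι t}`, `u ∈ Δ(S)`.
-/

noncomputable section

open Finset

theorem notMem_closure_convexHull_of_lt {E : Type*} [AddCommGroup E] [Module ℝ E]
    [TopologicalSpace E] [IsTopologicalAddGroup E] [ContinuousSMul ℝ E] [T2Space E]
    {A : Set E} (hA : A.Finite) (f : E →ₗ[ℝ] ℝ) {x : E} (h : ∀ a ∈ A, f a < f x) :
    x ∉ closure (convexHull ℝ A) := by
  rw [(hA.isClosed_convexHull ℝ).closure_eq]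
  intro hx
  obtain ⟨a, ha, hxa⟩ :=
    (f.convexOn convex_univ).exists_ge_of_mem_convexHull (Set.subset_univ A) hx
  exact (h a ha).not_ge hxa

theorem abs_sub_dotProduct_le {S : Type*} [Fintype S] {x y d : S → ℝ} {m M : ℝ}
    (hxy : ∑ i, x i = ∑ i, y i) (hd : ∀ i, d i ∈ Set.Icc m M) :
    |(x - y) ⬝ᵥ d| ≤ (∑ i, |x i - y i|) * (M - m) := by
  have hshift : (x - y) ⬝ᵥ d = ∑ i, (x i - y i) * (d i - m) := by
    simp only [dotProduct, Pi.sub_apply, mul_sub, sum_sub_distrib, ← sum_mul, hxy, sub_self,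
      zero_mul, sub_zero]
  rw [hshift, sum_mul]
  refine (abs_sum_le_sum_abs _ _).trans (sum_le_sum fun i _ => ?_)
  rw [abs_mul, abs_of_nonneg (sub_nonneg.2 (hd i).1)]
  exact mul_le_mul_of_nonneg_left (by linarith [(hd i).2]) (abs_nonneg _)

section Menus

variable {S T : Type*} [Fintype S]

def IncentiveCompatible (p : T → S → ℝ) (ε : ℝ) (c : T → S → ℝ) : Prop :=
  ∀ t s : T, ∀ π ∈ contaminated p ε t, dotp π (c t) ≤ dotp π (c s)

variable {p c : T → S → ℝ} {ε : ℝ}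

theorem IncentiveCompatible.mix_single_le [DecidableEq S] (hc : IncentiveCompatible p ε c)
    (a b : T) (j : S) : (1 - ε) * (p a ⬝ᵥ (c a - c b)) + ε * (c a - c b) j ≤ 0 := by
  have h : ((1 - ε) • p a + ε • Pi.single j 1) ⬝ᵥ c a ≤
      ((1 - ε) • p a + ε • Pi.single j 1) ⬝ᵥ c b :=
    hc a b _ ⟨_, single_mem_stdSimplex ℝ j, rfl⟩
  rwa [← sub_nonpos, ← dotProduct_sub, add_dotProduct, smul_dotProduct, smul_dotProduct,
    single_one_dotProduct, smul_eq_mul, smul_eq_mul] at h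

theorem IncentiveCompatible.eq_of_sum_abs_lt [Nonempty S] (hc : IncentiveCompatible p ε c)
    (hε1 : ε ≤ 1) {t t' : T} (ht : p t ∈ stdSimplex ℝ S) (ht' : p t' ∈ stdSimplex ℝ S)
    (hclose : (1 - ε) * ∑ i, |p t i - p t' i| < ε) : c t = c t' := by
  classical
  set d := c t - c t' with hd_def
  obtain ⟨j, hj⟩ := Finite.exists_max d
  obtain ⟨k, hk⟩ := Finite.exists_min d
  have h₁ : (1 - ε) * (p t ⬝ᵥ d) + ε * d j ≤ 0 := hc.mix_single_le t t' j
  have h₂ : (1 - ε) * -(p t' ⬝ᵥ d) + ε * -d k ≤ 0 := by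
    simpa only [hd_def, ← neg_sub (c t), dotProduct_neg, Pi.neg_apply] using
      hc.mix_single_le t' t k
  have hosc := abs_sub_dotProduct_le (d := d) (ht.2.trans ht'.2.symm) fun i => ⟨hk i, hj i⟩
  rw [sub_dotProduct] at hosc
  have hflat : d j = d k := by
    by_contra hne
    have hpos : 0 < d j - d k := sub_pos.2 ((hk j).lt_of_ne' hne)
    nlinarith [neg_abs_le (p t ⬝ᵥ d - p t' ⬝ᵥ d), mul_lt_mul_of_pos_right hclose hpos]
  have hconst : d = fun _ => d k := funext fun i => le_antisymm (hflat ▸ hj i) (hk i)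
  have hdot : ∀ x ∈ stdSimplex ℝ S, x ⬝ᵥ d = d k := fun x hx => by
    rw [hconst, dotProduct_comm, dotProduct, ← mul_sum, hx.2, mul_one]
  rw [hdot _ ht, hflat] at h₁
  rw [hdot _ ht'] at h₂
  have hzero : d k = 0 := by linarith
  rw [← sub_eq_zero]
  exact hconst.trans (funext fun _ => hzero)

end Menus

section Beliefs

variable {S T : Type*}

theorem sum_abs_sub_le_two [Fintype S] {x y : S → ℝ} (hx : x ∈ stdSimplex ℝ S)
    (hy : y ∈ stdSimplex ℝ S) : ∑ i, |x i - y i| ≤ 2 := by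
  calc ∑ i, |x i - y i| ≤ ∑ i, (x i + y i) := sum_le_sum fun i _ => by
        simpa only [abs_of_nonneg (hx.1 i), abs_of_nonneg (hy.1 i)] using abs_sub (x i) (y i)
    _ = 2 := by rw [sum_add_distrib, hx.2, hy.2]; norm_num

def diagonallyDominant (ι : T → S) : Set (T → S → ℝ) :=
  {p | ∀ t s, s ≠ t → p s (ι t) < p t (ι t)}

def pairwiseClose [Fintype S] (ε : ℝ) : Set (T → S → ℝ) :=
  {p | ∀ t s, (1 - ε) * ∑ i, |p t i - p s i| < ε}

theorem isOpen_diagonallyDominant [Finite T] (ι : T → S) :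
    IsOpen (diagonallyDominant (S := S) ι) := by
  simp only [diagonallyDominant, Set.ofPred_forall]
  refine isOpen_iInter_of_finite fun t => isOpen_iInter_of_finite fun s => ?_
  by_cases hst : s = t
  · simp [hst]
  · simpa [hst] using isOpen_lt (by fun_prop) (by fun_prop)

theorem isOpen_pairwiseClose [Fintype S] [Finite T] (ε : ℝ) :
    IsOpen (pairwiseClose (S := S) (T := T) ε) := by
  simp only [pairwiseClose, Set.ofPred_forall]
  exact isOpen_iInter_of_finite fun t => isOpen_iInter_of_finite fun s =>
    isOpen_lt (by fun_prop) continuous_const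

theorem exists_stdSimplex_mem_diagonallyDominant_inter_pairwiseClose [Fintype S] [DecidableEq S]
    (ι : T ↪ S) {u : S → ℝ} (hu : u ∈ stdSimplex ℝ S) {ε : ℝ} (hε0 : 0 < ε) (hε1 : ε ≤ 1) :
    ∃ p ∈ diagonallyDominant ι ∩ pairwiseClose ε, ∀ t, p t ∈ stdSimplex ℝ S := by
  set e : T → S → ℝ := fun t => Pi.single (ι t) 1
  refine ⟨fun t => (1 - ε / 2) • u + (ε / 2) • e t, ⟨?_, ?_⟩, ?_⟩
  · intro t s hst
    have hs : e s (ι t) = 0 := Pi.single_eq_of_ne' (ι.injective.ne hst) 1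
    have ht : e t (ι t) = 1 := Pi.single_eq_same _ _
    show (1 - ε / 2) * u (ι t) + ε / 2 * e s (ι t) < (1 - ε / 2) * u (ι t) + ε / 2 * e t (ι t)
    rw [hs, ht]
    linarith
  · intro t s
    have hsum : ∑ i, |((1 - ε / 2) • u + (ε / 2) • e t) i -
        ((1 - ε / 2) • u + (ε / 2) • e s) i| = ε / 2 * ∑ i, |e t i - e s i| := by
      simp only [Pi.add_apply, Pi.smul_apply, smul_eq_mul, add_sub_add_left_eq_sub, ← mul_sub,
        abs_mul, abs_of_pos (half_pos hε0), mul_sum]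
    have htwo : ∑ i, |e t i - e s i| ≤ 2 :=
      sum_abs_sub_le_two (single_mem_stdSimplex ℝ (ι t)) (single_mem_stdSimplex ℝ (ι s))
    show (1 - ε) * _ < ε
    rw [hsum]
    nlinarith [mul_le_mul_of_nonneg_left htwo (mul_nonneg (sub_nonneg.2 hε1) (half_pos hε0).le)]
  · exact fun t => convex_stdSimplex ℝ S hu (single_mem_stdSimplex ℝ (ι t)) (by linarith)
      (by positivity) (by ring)

end Beliefs

theorem stmt_13_general {S T : Type*} [Fintype S] [Fintype T] [Nonempty S]
    (hST : Fintype.card T ≤ Fintype.card S)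
    (ε : ℝ) (hε0 : 0 < ε) (hε1 : ε ≤ 1) :
    ∃ U : Set (T → (S → ℝ)), IsOpen U ∧
      (∃ p ∈ U, ∀ t, p t ∈ stdSimplex ℝ S) ∧
      ∀ p ∈ U, (∀ t, p t ∈ stdSimplex ℝ S) →
        ((∀ t : T, p t ∉ closure (convexHull ℝ (p '' {s | s ≠ t}))) ∧
          ∀ c : T → (S → ℝ),
            (∀ t s : T, ∀ π ∈ contaminated p ε t, dotp π (c t) ≤ dotp π (c s)) →
            ∀ t t' : T, c t = c t') := by
  classical
  obtain ⟨ι⟩ : Nonempty (T ↪ S) := Function.Embedding.nonempty_of_card_le hST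
  refine ⟨diagonallyDominant ι ∩ pairwiseClose ε,
    (isOpen_diagonallyDominant ι).inter (isOpen_pairwiseClose ε),
    exists_stdSimplex_mem_diagonallyDominant_inter_pairwiseClose ι
      (single_mem_stdSimplex ℝ (Classical.arbitrary S)) hε0 hε1, ?_⟩
  rintro p ⟨hdom, hclose⟩ hp
  refine ⟨fun t => notMem_closure_convexHull_of_lt (Set.toFinite _) (LinearMap.proj (ι t)) ?_,
    fun c hc t t' => IncentiveCompatible.eq_of_sum_abs_lt hc hε1 (hp t) (hp t') (hclose t t')⟩
  rintro _ ⟨s, hs, rfl⟩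
  exact hdom t s hs

/-- There is a nonempty open subset of `Δ(S)^T` (product topology) of point beliefs satisfying
convex independence such that for the ε-contaminated beliefs any incentive compatible menu is
constant.  Relatively open subsets of `Δ(S)^T` are exactly intersections of open subsets of the
ambient product space with `Δ(S)^T`. -/
theorem stmt_13 {S T : Type*} [Fintype S] [Fintype T] [Nonempty S] [Nonempty T]
    (hST : Fintype.card T ≤ Fintype.card S) (hT : 2 ≤ Fintype.card T)
    (ε : ℝ) (hε0 : 0 < ε) (hε1 : ε ≤ 1) :
    ∃ U : Set (T → (S → ℝ)), IsOpen U ∧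
      (∃ p ∈ U, ∀ t, p t ∈ stdSimplex ℝ S) ∧
      ∀ p ∈ U, (∀ t, p t ∈ stdSimplex ℝ S) →
        ((∀ t : T, p t ∉ closure (convexHull ℝ (p '' {s | s ≠ t}))) ∧
          ∀ c : T → (S → ℝ),
            (∀ t s : T, ∀ π ∈ contaminated p ε t, dotp π (c t) ≤ dotp π (c s)) →
            ∀ t t' : T, c t = c t') :=
  stmt_13_general hST ε hε0 hε1
end
end

section
/- Let π : T → Δ(S) be point beliefs satisfying convex independence. Then there exists ε ∈ (0,1) such that the ε-contaminated beliefs satisfy set-valued convex independence: Π_ε(t) ∩ closedConvexHull(⋃_{s ≠ t} Π_ε(s)) = ∅ for every t ∈ T. -/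
noncomputable section

open Metric

lemma contaminated_dist {S T : Type*} [Fintype S] [Nonempty S] (p : T → (S → ℝ))
    (hp : ∀ t, p t ∈ stdSimplex ℝ S) {ε : ℝ} (hε : 0 ≤ ε) {s : T} {x : S → ℝ}
    (hx : x ∈ contaminated p ε s) : dist x (p s) ≤ ε := by
  obtain ⟨q, hq, rfl⟩ := hx
  have h1 : (1 - ε) • p s + ε • q - p s = ε • (q - p s) := by
    rw [smul_sub]; module
  rw [dist_eq_norm, h1, norm_smul, Real.norm_of_nonneg hε]
  have hle : ‖q - p s‖ ≤ 1 := by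
    rw [pi_norm_le_iff_of_nonneg zero_le_one]
    intro i
    have h01 : ∀ r ∈ stdSimplex ℝ S, r i ∈ Set.Icc (0:ℝ) 1 := by
      intro r hr
      refine ⟨hr.1 i, ?_⟩
      rw [← hr.2]
      exact Finset.single_le_sum (fun j _ => hr.1 j) (Finset.mem_univ i)
    have hqi := h01 q hq
    have hpi := h01 (p s) (hp s)
    simp only [Pi.sub_apply, Real.norm_eq_abs]
    rw [abs_le]
    constructor <;> linarith [hqi.1, hqi.2, hpi.1, hpi.2]
  calc ε * ‖q - p s‖ ≤ ε * 1 := by nlinarith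
    _ = ε := mul_one ε

theorem stmt_16 {S T : Type*} [Fintype S] [Fintype T] [Nonempty S] [Nonempty T]
    (p : T → (S → ℝ)) (hp : ∀ t, p t ∈ stdSimplex ℝ S)
    (hci : ∀ t : T, p t ∉ closure (convexHull ℝ (p '' {s | s ≠ t}))) :
    ∃ ε : ℝ, 0 < ε ∧ ε < 1 ∧
      ∀ t : T, contaminated p ε t ∩
        closure (convexHull ℝ (⋃ s ∈ {s : T | s ≠ t}, contaminated p ε s)) = ∅ := by
  classical
  set A : T → Set (S → ℝ) := fun t => convexHull ℝ (p '' {s | s ≠ t}) with hA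
  have hd : ∀ t, (A t).Nonempty → 0 < infDist (p t) (A t) := by
    intro t ht
    have h1 : p t ∉ closure (A t) := hci t
    have h2 := (isClosed_closure.notMem_iff_infDist_pos ht.closure).mp h1
    rwa [Metric.infDist_closure] at h2
  set d : T → ℝ := fun t => if h : (A t).Nonempty then infDist (p t) (A t) else 1 with hdd
  have hdpos : ∀ t, 0 < d t := by
    intro t
    by_cases h : (A t).Nonempty <;> simp [hdd, h, hd t]
  set m : ℝ := Finset.univ.inf' Finset.univ_nonempty d with hm
  have hmpos : 0 < m := by
    rw [hm, Finset.lt_inf'_iff]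
    exact fun t _ => hdpos t
  refine ⟨min (1/2) (m/3), by positivity, lt_of_le_of_lt (min_le_left _ _) (by norm_num), ?_⟩
  set ε := min (1/2) (m/3) with hεdef
  have hε0 : 0 < ε := by positivity
  intro t
  rw [Set.eq_empty_iff_forall_notMem]
  rintro x ⟨hx1, hx2⟩
  -- closure of convex hull of the union is inside cthickening ε (A t)
  have hsub : closure (convexHull ℝ (⋃ s ∈ {s : T | s ≠ t}, contaminated p ε s))
      ⊆ cthickening ε (A t) := by
    apply closure_minimal
    · apply convexHull_min _ ((convex_convexHull ℝ _).cthickening ε)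
      rintro y hy
      simp only [Set.mem_iUnion] at hy
      obtain ⟨s, hs, hys⟩ := hy
      have hps : p s ∈ A t := subset_convexHull ℝ _ ⟨s, hs, rfl⟩
      exact mem_cthickening_of_dist_le y (p s) ε _ hps
        (contaminated_dist p hp hε0.le hys)
    · exact isClosed_cthickening
  have hxc := hsub hx2
  have hAne : (A t).Nonempty := by
    rcases Set.eq_empty_or_nonempty (A t) with h | h
    · rw [h, Metric.cthickening_empty] at hxc; exact hxc.elim
    · exact h
  have hinf : infDist x (A t) ≤ ε := by
    rw [Metric.mem_cthickening_iff] at hxc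
    rw [Metric.infDist]
    exact ENNReal.toReal_le_of_le_ofReal hε0.le hxc
  have hdt : d t ≤ infDist x (A t) + dist (p t) x := by
    have := Metric.infDist_le_infDist_add_dist (x := p t) (y := x) (s := A t)
    simp only [hdd, dif_pos hAne]
    linarith
  have hdx : dist (p t) x ≤ ε := by
    rw [dist_comm]; exact contaminated_dist p hp hε0.le hx1
  have hεm : ε ≤ m / 3 := min_le_right _ _
  have hmd : m ≤ d t := Finset.inf'_le _ (Finset.mem_univ t)
  linarith [hdpos t]
end
end

section
/- Suppose |S| ≥ |T|. Then there exist point beliefs π : T → Δ(S) satisfying convex independence and ε > 0 such that every family of beliefs Π (with each Π(t) a nonempty compact convex subset of Δ(S)) satisfying d_H(Π(t), {π(t)}) < ε for all t ∈ T satisfies set-valued convex independence: Π(t) ∩ closedConvexHull(⋃_{s ≠ t} Π(s)) = ∅ for every t ∈ T. -/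
/-!
Embed `T` into `S` and send `t` to the vertex `e_{f t}` of the simplex. Every point within `1/2`
of `e_{f t}` has `(f t)`-th coordinate above `1/2`, while every point within `1/2` of another
vertex has it below `1/2`; the closed half-space `{y | y (f t) ≤ 1/2}` is convex and closed, so it
contains the closed convex hull of the other sets, which is therefore disjoint from the `t`-th one.
Point beliefs are the special case of singletons.
-/

noncomputable section

theorem dist_le_hausdorffDist_singleton {α : Type*} [PseudoMetricSpace α] {s : Set α} {x : α}
    (hs : Bornology.IsBounded s) (hx : x ∈ s) (a : α) :
    dist x a ≤ Metric.hausdorffDist s {a} := by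
  rw [← Metric.infDist_singleton]
  exact Metric.infDist_le_hausdorffDist_of_mem hx
    (Metric.hausdorffEDist_ne_top_of_nonempty_of_bounded ⟨x, hx⟩ (Set.singleton_nonempty a) hs
      Bornology.isBounded_singleton)

section Vertices

variable {S T : Type*} [Fintype S]

theorem abs_apply_sub_le_dist (x y : S → ℝ) (i : S) : |x i - y i| ≤ dist x y := by
  simpa only [Real.dist_eq] using dist_le_pi_dist x y i

theorem disjoint_closure_convexHull_of_dist_single_lt [DecidableEq S] (f : T ↪ S)
    {P : T → Set (S → ℝ)} (hP : ∀ t, ∀ y ∈ P t, dist y (Pi.single (f t) 1) < 1 / 2) (t : T) :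
    Disjoint (P t) (closure (convexHull ℝ (⋃ s ∈ {s : T | s ≠ t}, P s))) := by
  have hlarge : ∀ x ∈ P t, 1 / 2 < x (f t) := by
    intro x hx
    have := (abs_apply_sub_le_dist x _ (f t)).trans_lt (hP t x hx)
    rw [Pi.single_eq_same] at this
    linarith [(abs_lt.mp this).1]
  have hsmall : closure (convexHull ℝ (⋃ s ∈ {s : T | s ≠ t}, P s)) ⊆ {y | y (f t) ≤ 1 / 2} := by
    rw [← closedConvexHull_eq_closure_convexHull]
    refine closedConvexHull_min ?_ (convex_halfSpace_le (LinearMap.proj (f t)).isLinear _)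
      (isClosed_le (continuous_apply _) continuous_const)
    simp only [Set.iUnion_subset_iff]
    intro s hst y hy
    have := (abs_apply_sub_le_dist y _ (f t)).trans_lt (hP s y hy)
    rw [Pi.single_eq_of_ne (f.injective.ne hst).symm, sub_zero] at this
    exact (abs_lt.mp this).2.le
  exact Set.disjoint_left.mpr fun x hx hx' => (hsmall hx').not_gt (hlarge x hx)

end Vertices

theorem stmt_17_general {S T : Type*} [Fintype S] [Fintype T]
    (hST : Fintype.card T ≤ Fintype.card S) :
    ∃ p : T → (S → ℝ), (∀ t, p t ∈ stdSimplex ℝ S) ∧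
      (∀ t : T, p t ∉ closure (convexHull ℝ (p '' {s | s ≠ t}))) ∧
      ∃ ε : ℝ, 0 < ε ∧
        ∀ P : T → Set (S → ℝ),
          (∀ t, (P t).Nonempty ∧ IsCompact (P t) ∧ Convex ℝ (P t) ∧ P t ⊆ stdSimplex ℝ S) →
          (∀ t, Metric.hausdorffDist (P t) {p t} < ε) →
          ∀ t : T, P t ∩ closure (convexHull ℝ (⋃ s ∈ {s : T | s ≠ t}, P s)) = ∅ := by
  classical
  obtain ⟨f⟩ := Function.Embedding.nonempty_of_card_le hST
  refine ⟨fun t => Pi.single (f t) 1, fun t => single_mem_stdSimplex ℝ (f t), ?_, 1 / 2,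
    one_half_pos, ?_⟩
  · intro t
    rw [Set.image_eq_iUnion, ← Set.disjoint_singleton_left]
    refine disjoint_closure_convexHull_of_dist_single_lt f (P := fun t => {Pi.single (f t) 1})
      ?_ t
    rintro s y rfl
    simp
  · intro P hP hdist t
    refine Set.disjoint_iff_inter_eq_empty.mp (disjoint_closure_convexHull_of_dist_single_lt f ?_ t)
    intro s y hy
    exact (dist_le_hausdorffDist_singleton (hP s).2.1.isBounded hy _).trans_lt (hdist s)

theorem stmt_17 {S T : Type*} [Fintype S] [Fintype T] [Nonempty S] [Nonempty T]
    (hST : Fintype.card T ≤ Fintype.card S) :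
    ∃ p : T → (S → ℝ), (∀ t, p t ∈ stdSimplex ℝ S) ∧
      (∀ t : T, p t ∉ closure (convexHull ℝ (p '' {s | s ≠ t}))) ∧
      ∃ ε : ℝ, 0 < ε ∧
        ∀ P : T → Set (S → ℝ),
          (∀ t, (P t).Nonempty ∧ IsCompact (P t) ∧ Convex ℝ (P t) ∧ P t ⊆ stdSimplex ℝ S) →
          (∀ t, Metric.hausdorffDist (P t) {p t} < ε) →
          ∀ t : T, P t ∩ closure (convexHull ℝ (⋃ s ∈ {s : T | s ≠ t}, P s)) = ∅ :=
  stmt_17_general hST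
end
end

section
/- Suppose T has at least two elements. Then there exist a family of beliefs Π (with each Π(t) a nonempty compact convex subset of Δ(S)) and δ > 0 such that every family of beliefs Π' (with each Π'(t) a nonempty compact convex subset of Δ(S)) satisfying d_H(Π'(t), Π(t)) < δ for all t ∈ T satisfies convex dependence: there exists t ∈ T with closedConvexHull(⋃_{s ≠ t} Π'(s)) ⊆ Π'(t). -/
/-!
Take `Π(t₀)` to be the whole simplex `Δ` and every other `Π(t)` to be its barycenter `p`. If
`Π'` is `δ`-close to `Π`, all `Π'(s)` with `s ≠ t₀`, hence the closed convex hull of their union,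
lie within `δ` of `p`. On the other hand `Π'(t₀)` is a closed convex set that comes `δ`-close to
every point of `Δ`, in particular to every point of the ball of radius `2δ` about `p` in the affine
hull of `Δ` (for `2δ = 1 / |S|`), and such a set contains the concentric ball of radius `δ`.
-/

noncomputable section

open Metric Set

/-- A functional attains its norm on the unit ball of a finite-dimensional subspace. -/
theorem Submodule.exists_norm_le_one_forall_apply_le_mul_norm {E : Type*} [NormedAddCommGroup E]
    [NormedSpace ℝ E] [FiniteDimensional ℝ E] (V : Submodule ℝ E) (f : E →L[ℝ] ℝ) :
    ∃ v ∈ V, ‖v‖ ≤ 1 ∧ 0 ≤ f v ∧ ∀ w ∈ V, f w ≤ f v * ‖w‖ := by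
  have hcompact : IsCompact ((V : Set E) ∩ closedBall 0 1) :=
    (isCompact_closedBall 0 1).inter_left V.closed_of_finiteDimensional
  have hzero : (0 : E) ∈ (V : Set E) ∩ closedBall 0 1 := ⟨V.zero_mem, by simp⟩
  obtain ⟨v, ⟨hvV, hv1⟩, hmax⟩ :=
    hcompact.exists_isMaxOn ⟨0, hzero⟩ f.continuous.continuousOn
  refine ⟨v, hvV, by simpa using hv1, by simpa using hmax hzero, fun w hw => ?_⟩
  rcases eq_or_ne w 0 with rfl | hw0
  · simp
  have hnorm : 0 < ‖w‖ := norm_pos_iff.2 hw0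
  have hscaled : ‖w‖⁻¹ • w ∈ (V : Set E) ∩ closedBall 0 1 :=
    ⟨V.smul_mem _ hw, by simp [norm_smul, hnorm.ne']⟩
  have : ‖w‖⁻¹ * f w ≤ f v := by simpa using hmax hscaled
  calc f w = ‖w‖ * (‖w‖⁻¹ * f w) := by field_simp
    _ ≤ ‖w‖ * f v := by gcongr
    _ = f v * ‖w‖ := mul_comm _ _

/-- A point `x` outside `K` is separated from it by a functional `f`; pushing `p` a distance `r + δ`
in the direction where `f` grows fastest gives a point that no point of `K` can approach. -/
theorem Convex.mem_of_forall_exists_dist_lt {E : Type*} [NormedAddCommGroup E] [NormedSpace ℝ E]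
    [FiniteDimensional ℝ E] {V : Submodule ℝ E} {K : Set E} {p x : E} {r δ : ℝ}
    (hK : Convex ℝ K) (hKclosed : IsClosed K) (hKV : ∀ k ∈ K, k - p ∈ V) (hδ : 0 ≤ δ)
    (hball : ∀ z, z - p ∈ V → ‖z - p‖ ≤ r + δ → ∃ k ∈ K, dist z k < δ)
    (hxV : x - p ∈ V) (hx : ‖x - p‖ ≤ r) : x ∈ K := by
  by_contra hxK
  obtain ⟨f, u, hfK, hfx⟩ := geometric_hahn_banach_closed_point hK hKclosed hxK
  obtain ⟨v, hvV, hv1, hfv0, hfv⟩ := V.exists_norm_le_one_forall_apply_le_mul_norm f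
  have hr : 0 ≤ r + δ := by linarith [norm_nonneg (x - p)]
  set z := p + (r + δ) • v
  have hzV : z - p ∈ V := by simpa [z] using V.smul_mem (r + δ) hvV
  have hzp : ‖z - p‖ ≤ r + δ := by
    simpa [z, norm_smul, abs_of_nonneg hr] using mul_le_of_le_one_right hr hv1
  obtain ⟨k, hkK, hzk⟩ := hball z hzV hzp
  have hfz : f z = f p + (r + δ) * f v := by simp [z]
  have hfzk : f z - f k ≤ f v * δ := calc
    f z - f k = f (z - k) := (map_sub f z k).symm
    _ ≤ f v * ‖z - k‖ := hfv _ (by simpa using V.sub_mem hzV (hKV k hkK))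
    _ ≤ f v * δ := by rw [← dist_eq_norm]; gcongr
  have hfxp : f x - f p ≤ f v * r := calc
    f x - f p = f (x - p) := (map_sub f x p).symm
    _ ≤ f v * ‖x - p‖ := hfv _ hxV
    _ ≤ f v * r := by gcongr
  linarith [hfK k hkK]

section Simplex

variable {S : Type*} [Fintype S]

def zeroSumSubspace (S : Type*) [Fintype S] : Submodule ℝ (S → ℝ) :=
  LinearMap.ker (∑ s : S, LinearMap.proj s)

theorem mem_zeroSumSubspace {w : S → ℝ} : w ∈ zeroSumSubspace S ↔ ∑ s, w s = 0 := by
  simp [zeroSumSubspace]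

theorem sub_mem_zeroSumSubspace {x y : S → ℝ} (hx : x ∈ stdSimplex ℝ S)
    (hy : y ∈ stdSimplex ℝ S) : x - y ∈ zeroSumSubspace S := by
  simp [mem_zeroSumSubspace, Finset.sum_sub_distrib, hx.2, hy.2]

variable [Nonempty S]

def barycenter (S : Type*) [Fintype S] : S → ℝ := fun _ => (Fintype.card S : ℝ)⁻¹

theorem barycenter_mem_stdSimplex : barycenter S ∈ stdSimplex ℝ S :=
  ⟨fun _ => by simp [barycenter], by simp [barycenter]⟩

theorem mem_stdSimplex_of_norm_sub_barycenter_le {z : S → ℝ}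
    (hz : z - barycenter S ∈ zeroSumSubspace S)
    (hnorm : ‖z - barycenter S‖ ≤ (Fintype.card S : ℝ)⁻¹) : z ∈ stdSimplex ℝ S := by
  refine ⟨fun s => ?_, ?_⟩
  · have := (abs_le.1 ((norm_le_pi_norm (z - barycenter S) s).trans hnorm)).1
    simp only [Pi.sub_apply, barycenter] at this
    linarith
  · have := mem_zeroSumSubspace.1 hz
    simp only [Pi.sub_apply, Finset.sum_sub_distrib] at this
    linarith [barycenter_mem_stdSimplex (S := S) |>.2]

end Simplex

theorem Metric.exists_dist_lt_of_hausdorffDist_lt_of_isBounded {α : Type*} [PseudoMetricSpace α]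
    {A B : Set α} {x : α} {δ : ℝ} (hA : Bornology.IsBounded A) (hB : Bornology.IsBounded B)
    (hB0 : B.Nonempty) (hx : x ∈ A) (h : hausdorffDist A B < δ) : ∃ y ∈ B, dist x y < δ :=
  exists_dist_lt_of_hausdorffDist_lt hx h
    (hausdorffEDist_ne_top_of_nonempty_of_bounded ⟨x, hx⟩ hB0 hA hB)

theorem stmt_18 {S T : Type*} [Fintype S] [Fintype T] [Nonempty S] [Nontrivial T] :
    ∃ P : T → Set (S → ℝ),
      (∀ t, (P t).Nonempty ∧ IsCompact (P t) ∧ Convex ℝ (P t) ∧ P t ⊆ stdSimplex ℝ S) ∧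
      ∃ δ : ℝ, 0 < δ ∧
        ∀ P' : T → Set (S → ℝ),
          (∀ t, (P' t).Nonempty ∧ IsCompact (P' t) ∧ Convex ℝ (P' t) ∧ P' t ⊆ stdSimplex ℝ S) →
          (∀ t, Metric.hausdorffDist (P' t) (P t) < δ) →
          ∃ t : T, closure (convexHull ℝ (⋃ s ∈ {s : T | s ≠ t}, P' s)) ⊆ P' t := by
  classical
  obtain ⟨t₀⟩ : Nonempty T := inferInstance
  set p := barycenter S
  set δ : ℝ := (Fintype.card S : ℝ)⁻¹ / 2
  have hδ : 0 < δ := by positivity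
  refine ⟨fun t => if t = t₀ then stdSimplex ℝ S else {p}, fun t => ?_, δ, hδ,
    fun P' hP' hd => ⟨t₀, ?_⟩⟩
  · dsimp only
    split_ifs
    · exact ⟨⟨p, barycenter_mem_stdSimplex⟩, isCompact_stdSimplex ℝ S, convex_stdSimplex ℝ S,
        subset_rfl⟩
    · exact ⟨singleton_nonempty p, isCompact_singleton, convex_singleton p,
        singleton_subset_iff.2 barycenter_mem_stdSimplex⟩
  have hnear : ∀ s ≠ t₀, P' s ⊆ closedBall p δ := fun s hs y hy => by
    have hds := hd s
    simp only [if_neg hs] at hds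
    obtain ⟨_, rfl, hyp⟩ := exists_dist_lt_of_hausdorffDist_lt_of_isBounded
      (hP' s).2.1.isBounded Bornology.isBounded_singleton (singleton_nonempty p) hy hds
    exact mem_closedBall.2 hyp.le
  have hhull : closure (convexHull ℝ (⋃ s ∈ {s : T | s ≠ t₀}, P' s)) ⊆
      stdSimplex ℝ S ∩ closedBall p δ :=
    closure_minimal
      (convexHull_min (iUnion₂_subset fun s hs => subset_inter (hP' s).2.2.2 (hnear s hs))
        ((convex_stdSimplex ℝ S).inter (convex_closedBall p δ)))
      ((isCompact_stdSimplex ℝ S).isClosed.inter isClosed_closedBall)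
  intro x hx
  obtain ⟨hxΔ, hxp⟩ := hhull hx
  obtain ⟨hK0, hK, hKconv, hKΔ⟩ := hP' t₀
  have hdK := hd t₀
  simp only [if_true] at hdK
  refine hKconv.mem_of_forall_exists_dist_lt (r := δ) hK.isClosed
    (fun k hk => sub_mem_zeroSumSubspace (hKΔ hk) barycenter_mem_stdSimplex) hδ.le
    (fun z hzV hz => ?_) (sub_mem_zeroSumSubspace hxΔ barycenter_mem_stdSimplex)
    (by rwa [← dist_eq_norm, ← mem_closedBall])
  have hzΔ : z ∈ stdSimplex ℝ S := mem_stdSimplex_of_norm_sub_barycenter_le hzV (by simpa [δ] using hz)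
  exact exists_dist_lt_of_hausdorffDist_lt_of_isBounded (isCompact_stdSimplex ℝ S).isBounded
    hK.isBounded hK0 hzΔ (by rwa [hausdorffDist_comm])
end
end

section
/- Suppose |S| ≥ |T| ≥ 2. Let B be the space of nonempty compact convex subsets of Δ(S) equipped with the Hausdorff metric, and give B^T the product topology. Let I := {Π ∈ B^T : Π satisfies convex independence} and D := {Π ∈ B^T : Π satisfies convex dependence}. Then neither I nor D is residual (comeager) in B^T. -/
noncomputable section

open TopologicalSpace

/-- The space of nonempty compact convex subsets of the simplex `Δ(S)`, viewed as a subspace of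
the space of nonempty compact subsets of `ℝ^S` equipped with the Hausdorff metric. -/
def Bel (S : Type*) [Fintype S] : Type _ :=
  {K : NonemptyCompacts (S → ℝ) //
    Convex ℝ (K : Set (S → ℝ)) ∧ (K : Set (S → ℝ)) ⊆ stdSimplex ℝ S}

instance (S : Type*) [Fintype S] : MetricSpace (Bel S) :=
  inferInstanceAs (MetricSpace {K : NonemptyCompacts (S → ℝ) //
    Convex ℝ (K : Set (S → ℝ)) ∧ (K : Set (S → ℝ)) ⊆ stdSimplex ℝ S})

/-- A tuple of belief sets satisfies convex independence. -/
def ConvexIndep {S T : Type*} [Fintype S] (Q : T → Bel S) : Prop :=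
  ∀ t : T, ((Q t).1 : Set (S → ℝ)) ∩
    closure (convexHull ℝ (⋃ s ∈ {s : T | s ≠ t}, ((Q s).1 : Set (S → ℝ)))) = ∅

/-- A tuple of belief sets satisfies convex dependence. -/
def ConvexDep {S T : Type*} [Fintype S] (Q : T → Bel S) : Prop :=
  ∃ t : T, closure (convexHull ℝ (⋃ s ∈ {s : T | s ≠ t}, ((Q s).1 : Set (S → ℝ)))) ⊆ ((Q t).1 : Set (S → ℝ))

/-!
Both sets miss a nonempty open subset of `B^T`, which is a complete metric space and hence a Baire
space. Every convex set Hausdorff-close to `Δ(S)` contains the barycenter of `Δ(S)`, so near the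
tuple with all entries `Δ(S)` the entries pairwise intersect and convex independence fails. Near a
tuple of distinct vertices the entries are pairwise far apart, so no entry contains another and
convex dependence fails.
-/

open Metric Set

namespace TopologicalSpace.NonemptyCompacts

variable {α : Type*} [MetricSpace α]

theorem exists_dist_lt_of_dist_lt {K L : NonemptyCompacts α} {r : ℝ} (h : dist K L < r)
    {x : α} (hx : x ∈ K) : ∃ y ∈ L, dist x y < r :=
  exists_dist_lt_of_hausdorffDist_lt hx h <| hausdorffEDist_ne_top_of_nonempty_of_bounded
    K.nonempty L.nonempty K.isCompact.isBounded L.isCompact.isBounded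

theorem isClosed_setOf_subset {C : Set α} (hC : IsClosed C) :
    IsClosed {K : NonemptyCompacts α | (K : Set α) ⊆ C} := by
  refine isClosed_of_closure_subset fun K hK x hx => hC.closure_subset ?_
  refine Metric.mem_closure_iff.2 fun ε hε => ?_
  obtain ⟨L, hLC, hKL⟩ := Metric.mem_closure_iff.1 hK ε hε
  obtain ⟨y, hy, hxy⟩ := exists_dist_lt_of_dist_lt hKL hx
  exact ⟨y, hLC hy, hxy⟩

theorem isClosed_setOf_convex {E : Type*} [NormedAddCommGroup E] [NormedSpace ℝ E] :
    IsClosed {K : NonemptyCompacts E | Convex ℝ (K : Set E)} := by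
  refine isClosed_of_closure_subset fun K hK x hx y hy a b ha hb hab =>
    K.isCompact.isClosed.closure_subset <| Metric.mem_closure_iff.2 fun ε hε => ?_
  obtain ⟨L, hL, hKL⟩ := Metric.mem_closure_iff.1 hK (ε / 2) (half_pos hε)
  obtain ⟨x', hx', hxx'⟩ := exists_dist_lt_of_dist_lt hKL hx
  obtain ⟨y', hy', hyy'⟩ := exists_dist_lt_of_dist_lt hKL hy
  obtain ⟨z, hz, hzz'⟩ :=
    exists_dist_lt_of_dist_lt (dist_comm K L ▸ hKL) (hL hx' hy' ha hb hab)
  refine ⟨z, hz, ?_⟩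
  have hcombo : dist (a • x + b • y) (a • x' + b • y') ≤ ε / 2 :=
    calc dist (a • x + b • y) (a • x' + b • y')
        ≤ dist (a • x) (a • x') + dist (b • y) (b • y') := dist_add_add_le _ _ _ _
      _ = a * dist x x' + b * dist y y' := by
          rw [dist_smul₀, dist_smul₀, Real.norm_of_nonneg ha, Real.norm_of_nonneg hb]
      _ ≤ a * (ε / 2) + b * (ε / 2) := by gcongr
      _ = ε / 2 := by rw [← add_mul, hab, one_mul]
  linarith [dist_triangle (a • x + b • y) (a • x' + b • y') z]

end TopologicalSpace.NonemptyCompacts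

instance Bel.completeSpace (S : Type*) [Fintype S] : CompleteSpace (Bel S) :=
  IsClosed.completeSpace_coe (hs := NonemptyCompacts.isClosed_setOf_convex.inter
    (NonemptyCompacts.isClosed_setOf_subset (isCompact_stdSimplex ℝ S).isClosed))

def stdSimplexCenter (S : Type*) [Fintype S] : S → ℝ := fun _ => (Fintype.card S : ℝ)⁻¹

section Simplex

variable {S : Type*} [Fintype S] [DecidableEq S]

theorem one_le_dist_single_single {i j : S} (hij : i ≠ j) :
    1 ≤ dist (Pi.single i 1 : S → ℝ) (Pi.single j 1) := by
  simpa [Pi.single_eq_of_ne hij] using dist_le_pi_dist (Pi.single i 1 : S → ℝ) (Pi.single j 1) i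

/-- Otherwise separate the center `c` from `K` by a functional `f` and take a vertex `e k` at which
`f` is largest: for `x ∈ K` near `e k`, `f (e k) - f x ≤ n * dist (e k) x * (f (e k) - f c)`,
which contradicts `f x < f c` since `n * dist (e k) x < 1`. -/
theorem stdSimplexCenter_mem [Nonempty S] {K : Set (S → ℝ)} (hKc : Convex ℝ K)
    (hKcl : IsClosed K) (hKs : K ⊆ stdSimplex ℝ S)
    (hnear : ∀ i, ∃ x ∈ K, dist (Pi.single i 1 : S → ℝ) x < (Fintype.card S : ℝ)⁻¹) :
    stdSimplexCenter S ∈ K := by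
  by_contra hc
  obtain ⟨f, u, hfK, huc⟩ := geometric_hahn_banach_closed_point hKc hKcl hc
  set g : S → ℝ := fun i => f (Pi.single i 1)
  have hf : ∀ y, f y = ∑ i, y i * g i := fun y => by
    conv_lhs => rw [pi_eq_sum_univ' y, map_sum]
    simp only [map_smul, smul_eq_mul, g]
  obtain ⟨k, -, hk⟩ := Finset.exists_max_image Finset.univ g Finset.univ_nonempty
  obtain ⟨x, hxK, hdist⟩ := hnear k
  set n : ℝ := (Fintype.card S : ℝ)
  set d := dist (Pi.single k 1 : S → ℝ) x
  have hn : 0 < n := by simp [n, Fintype.card_pos]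
  have hcenter : n * f (stdSimplexCenter S) = ∑ i, g i := by
    simp [hf, stdSimplexCenter, ← Finset.mul_sum, n, hn.ne']
  have hx_le : ∀ i ≠ k, x i ≤ d := fun i hik => by
    have := dist_le_pi_dist (Pi.single k 1 : S → ℝ) x i
    rw [Pi.single_eq_of_ne hik, Real.dist_eq, zero_sub, abs_neg] at this
    exact (le_abs_self _).trans this
  have hgap : g k - f x ≤ d * (n * g k - ∑ i, g i) :=
    calc g k - f x = ∑ i, x i * (g k - g i) := by
          simp only [hf, mul_sub, Finset.sum_sub_distrib, ← Finset.sum_mul, (hKs hxK).2, one_mul]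
      _ ≤ ∑ i, d * (g k - g i) := Finset.sum_le_sum fun i _ => by
          rcases eq_or_ne i k with rfl | hik
          · simp
          · exact mul_le_mul_of_nonneg_right (hx_le i hik) (sub_nonneg.2 (hk i (by simp)))
      _ = d * (n * g k - ∑ i, g i) := by simp [← Finset.mul_sum, Finset.sum_sub_distrib, n]
  have hmax : 0 ≤ n * g k - ∑ i, g i := by
    simpa [Finset.sum_sub_distrib, n] using
      Finset.sum_nonneg fun i (_ : i ∈ Finset.univ) => sub_nonneg.2 (hk i (Finset.mem_univ i))
  have hdn : d * n < 1 := by rwa [← lt_div_iff₀ hn, one_div]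
  nlinarith [hfK x hxK]

end Simplex

theorem subset_closure_convexHull_biUnion_ne {E ι : Type*} [AddCommGroup E] [Module ℝ E]
    [TopologicalSpace E] (A : ι → Set E) {s t : ι} (hst : s ≠ t) :
    A s ⊆ closure (convexHull ℝ (⋃ r ∈ {r : ι | r ≠ t}, A r)) :=
  ((subset_biUnion_of_mem (u := A) hst).trans (subset_convexHull ℝ _)).trans subset_closure

theorem notMem_residual_of_isOpen_subset_compl {X : Type*} [TopologicalSpace X] [BaireSpace X]
    {s U : Set X} (hU : IsOpen U) (hUne : U.Nonempty) (hUs : U ⊆ sᶜ) : s ∉ residual X :=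
  fun hs => ((dense_of_mem_residual hs).inter_open_nonempty U hU hUne).ne_empty <|
    Set.disjoint_iff_inter_eq_empty.1 (Set.subset_compl_iff_disjoint_right.1 hUs)

namespace Bel

variable {S T : Type*} [Fintype S] [Fintype T]

def simplex (S : Type*) [Fintype S] [Nonempty S] : Bel S :=
  ⟨⟨⟨stdSimplex ℝ S, isCompact_stdSimplex ℝ S⟩, ⟨stdSimplexCenter S, by
    simp [stdSimplexCenter, stdSimplex]⟩⟩, convex_stdSimplex ℝ S, subset_rfl⟩

def vertex [DecidableEq S] (i : S) : Bel S :=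
  ⟨{Pi.single i 1}, convex_singleton _, singleton_subset_iff.2 (single_mem_stdSimplex ℝ i)⟩

theorem stdSimplexCenter_mem_of_dist_lt [Nonempty S] {P : Bel S}
    (h : dist P (simplex S) < (Fintype.card S : ℝ)⁻¹) :
    stdSimplexCenter S ∈ (P.1 : Set (S → ℝ)) := by
  classical
  refine stdSimplexCenter_mem P.2.1 P.1.isCompact.isClosed P.2.2 fun i => ?_
  exact NonemptyCompacts.exists_dist_lt_of_dist_lt (dist_comm P _ ▸ h)
    (single_mem_stdSimplex ℝ i)

theorem not_convexIndep_of_dist_lt [Nonempty S] [Nontrivial T] {Q : T → Bel S}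
    (h : dist Q (fun _ => simplex S) < (Fintype.card S : ℝ)⁻¹) : ¬ ConvexIndep Q := by
  intro hQ
  obtain ⟨a, c, hac⟩ := exists_pair_ne T
  have hmem (t : T) : stdSimplexCenter S ∈ ((Q t).1 : Set (S → ℝ)) :=
    stdSimplexCenter_mem_of_dist_lt ((dist_le_pi_dist Q _ t).trans_lt h)
  exact (hQ a).subset ⟨hmem a, subset_closure_convexHull_biUnion_ne _ hac.symm (hmem c)⟩

theorem not_convexDep_of_dist_lt [DecidableEq S] [Nontrivial T] {e : T ↪ S} {Q : T → Bel S}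
    (h : dist Q (fun t => vertex (e t)) < 1 / 2) : ¬ ConvexDep Q := by
  rintro ⟨t, ht⟩
  obtain ⟨s, hst⟩ := exists_ne t
  have hd (r : T) : dist (Q r) (vertex (e r)) < 1 / 2 := (dist_le_pi_dist Q _ r).trans_lt h
  obtain ⟨p, hp, hsp⟩ := NonemptyCompacts.exists_dist_lt_of_dist_lt (dist_comm (Q s) _ ▸ hd s)
    (x := Pi.single (e s) 1) rfl
  obtain ⟨q, rfl, hpt⟩ := NonemptyCompacts.exists_dist_lt_of_dist_lt (hd t)
    (ht (subset_closure_convexHull_biUnion_ne _ hst hp))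
  linarith [dist_triangle (Pi.single (e s) 1 : S → ℝ) p (Pi.single (e t) 1),
    one_le_dist_single_single (e.injective.ne hst)]

end Bel

theorem stmt_19_general {S T : Type*} [Fintype S] [Fintype T] [Nonempty S]
    (hST : Fintype.card T ≤ Fintype.card S) (hT : 2 ≤ Fintype.card T) :
    ¬ ({Q : T → Bel S | ConvexIndep Q} ∈ residual (T → Bel S)) ∧
    ¬ ({Q : T → Bel S | ConvexDep Q} ∈ residual (T → Bel S)) := by
  classical
  have : Nontrivial T := Fintype.one_lt_card_iff_nontrivial.1 hT
  obtain ⟨e⟩ := Function.Embedding.nonempty_of_card_le hST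
  constructor
  · refine notMem_residual_of_isOpen_subset_compl
      (U := ball (fun _ => Bel.simplex S) (Fintype.card S : ℝ)⁻¹) isOpen_ball
      (nonempty_ball.2 (by positivity)) fun Q hQ => ?_
    exact Bel.not_convexIndep_of_dist_lt hQ
  · refine notMem_residual_of_isOpen_subset_compl (U := ball (fun t => Bel.vertex (e t)) (1 / 2))
      isOpen_ball (nonempty_ball.2 one_half_pos) fun Q hQ => ?_
    exact Bel.not_convexDep_of_dist_lt hQ

theorem stmt_19 {S T : Type*} [Fintype S] [Fintype T] [Nonempty S] [Nonempty T]
    (hST : Fintype.card T ≤ Fintype.card S) (hT : 2 ≤ Fintype.card T) :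
    ¬ ({Q : T → Bel S | ConvexIndep Q} ∈ residual (T → Bel S)) ∧
    ¬ ({Q : T → Bel S | ConvexDep Q} ∈ residual (T → Bel S)) :=
  stmt_19_general hST hT
end
end
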